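/- arXiv:math/0701739 — 4 statements merged into one kernel-verified Lean document; each statement's English description precedes it below -/
import Mathlib

section
/- Let X be a zero mean fourth-order stationary time series satisfying γ = Σ_{ℓ∈ℤ} R(ℓ)² < ∞ and κ₄ = Σ_{i,j,k} |κ₄(i,j,k)| < ∞. Then for every n ≥ 1, n · sup_{ℓ≥0} Var(R̂_n(ℓ)) ≤ κ₄ + 2γ, where R̂_n(ℓ) = (1/n) Σ_{j=1∨(1−ℓ)}^{(n−ℓ)∧n} X_j X_{j+ℓ} is the empirical covariance. -/
/-!
Write `Y_j = X_j X_{j+ℓ}`, so that `R̂_n(ℓ) = n⁻¹ ∑_{j ∈ s} Y_j` over an integer interval `s` with at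
most `n` points, and `Var R̂_n(ℓ) = n⁻² ∑_{j, j' ∈ s} Cov(Y_j, Y_{j'})`. By stationarity
`Cov(Y_j, Y_{j+d}) = κ₄(ℓ, d, d + ℓ) + R(d)² + R(d + ℓ) R(d - ℓ)` depends only on the lag `d`, so each row
of the double sum is bounded by the sum over all lags of the absolute value of this expression. The
cumulant part is a sub-series of `κ₄`, and `|R(d + ℓ) R(d - ℓ)| ≤ (R(d + ℓ)² + R(d - ℓ)²) / 2` sums to
at most `γ`; hence `n · Var R̂_n(ℓ) ≤ (#s / n) (κ₄ + 2γ) ≤ κ₄ + 2γ`.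
-/

open MeasureTheory ProbabilityTheory Finset

theorem sum_sum_le_card_mul_tsum {G : Type*} [AddGroup G] (s : Finset G) {c : G → G → ℝ}
    {h : G → ℝ} (hc : ∀ i j, c i j ≤ h (j - i)) (h0 : ∀ d, 0 ≤ h d) (hs : Summable h) :
    ∑ i ∈ s, ∑ j ∈ s, c i j ≤ #s * ∑' d, h d := by
  have row : ∀ i, ∑ j ∈ s, h (j - i) ≤ ∑' d, h d := fun i =>
    (sum_map s (Equiv.subRight i).toEmbedding h).symm.trans_le (hs.sum_le_tsum _ fun d _ => h0 d)
  calc ∑ i ∈ s, ∑ j ∈ s, c i j ≤ ∑ i ∈ s, ∑ j ∈ s, h (j - i) := by gcongr with i _ j _; exact hc i j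
    _ ≤ ∑ _i ∈ s, ∑' d, h d := sum_le_sum fun i _ => row i
    _ = #s * ∑' d, h d := by rw [sum_const, nsmul_eq_mul]

theorem abs_mul_le_add_sq_div_two (x y : ℝ) : |x * y| ≤ (x ^ 2 + y ^ 2) / 2 := by
  have := two_mul_le_add_sq |x| |y|
  rw [sq_abs, sq_abs] at this
  rw [abs_mul]
  linarith

section ShiftedProducts

variable {G : Type*} [AddGroup G] {f : G → ℝ}

theorem summable_abs_mul_shift (hf : Summable fun g => f g ^ 2) (a b : G) :
    Summable fun g => |f (g + a) * f (g + b)| :=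
  Summable.of_nonneg_of_le (fun _ => abs_nonneg _) (fun _ => abs_mul_le_add_sq_div_two _ _)
    (((hf.comp_injective (add_left_injective a)).add
      (hf.comp_injective (add_left_injective b))).div_const 2)

theorem tsum_abs_mul_shift_le (hf : Summable fun g => f g ^ 2) (a b : G) :
    ∑' g, |f (g + a) * f (g + b)| ≤ ∑' g, f g ^ 2 := by
  have ha : Summable fun g => f (g + a) ^ 2 := hf.comp_injective (add_left_injective a)
  have hb : Summable fun g => f (g + b) ^ 2 := hf.comp_injective (add_left_injective b)
  have shift : ∀ c, ∑' g, f (g + c) ^ 2 = ∑' g, f g ^ 2 := fun c =>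
    (Equiv.addRight c).tsum_eq fun g => f g ^ 2
  calc ∑' g, |f (g + a) * f (g + b)| ≤ ∑' g, (f (g + a) ^ 2 + f (g + b) ^ 2) / 2 :=
        (summable_abs_mul_shift hf a b).tsum_le_tsum (fun _ => abs_mul_le_add_sq_div_two _ _)
          ((ha.add hb).div_const 2)
    _ = ((∑' g, f (g + a) ^ 2) + ∑' g, f (g + b) ^ 2) / 2 := by
        rw [tsum_div_const, ha.tsum_add hb]
    _ = ∑' g, f g ^ 2 := by rw [shift, shift]; ring

end ShiftedProducts

theorem integral_sq_sub_integral_const_mul_sum {Ω ι : Type*} [MeasurableSpace Ω] {μ : Measure Ω}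
    [IsFiniteMeasure μ] (s : Finset ι) {Y : ι → Ω → ℝ} (hY : ∀ i ∈ s, MemLp (Y i) 2 μ) (c : ℝ) :
    ∫ ω, (c * ∑ i ∈ s, Y i ω - ∫ ω', c * ∑ i ∈ s, Y i ω' ∂μ) ^ 2 ∂μ
      = c ^ 2 * ∑ i ∈ s, ∑ j ∈ s, cov[Y i, Y j; μ] := by
  have hcov : ∫ ω, (c * ∑ i ∈ s, Y i ω - ∫ ω', c * ∑ i ∈ s, Y i ω' ∂μ) ^ 2 ∂μ
      = cov[fun ω => c * ∑ i ∈ s, Y i ω, fun ω => c * ∑ i ∈ s, Y i ω; μ] := by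
    simp only [covariance, sq]
  rw [hcov, covariance_const_mul_left, covariance_const_mul_right,
    covariance_fun_sum_fun_sum' hY hY]
  ring

section LagCovBound

variable {R : ℤ → ℝ} {κ4 : ℤ → ℤ → ℤ → ℝ}

theorem lag_triple_injective (ℓ : ℤ) : Function.Injective fun d : ℤ => (ℓ, d, d + ℓ) :=
  fun _ _ h => congrArg (fun t : ℤ × ℤ × ℤ => t.2.1) h

def lagCovBound (κ4 : ℤ → ℤ → ℤ → ℝ) (R : ℤ → ℝ) (ℓ d : ℤ) : ℝ :=
  |κ4 ℓ d (d + ℓ)| + R d ^ 2 + |R (d + ℓ) * R (d - ℓ)|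

theorem lagCovBound_nonneg (κ4 : ℤ → ℤ → ℤ → ℝ) (R : ℤ → ℝ) (ℓ d : ℤ) :
    0 ≤ lagCovBound κ4 R ℓ d := by
  unfold lagCovBound
  positivity

theorem summable_lagCovBound (hγ : Summable fun ℓ : ℤ => R ℓ ^ 2)
    (hκsum : Summable fun t : ℤ × ℤ × ℤ => |κ4 t.1 t.2.1 t.2.2|) (ℓ : ℤ) :
    Summable (lagCovBound κ4 R ℓ) := by
  have hκℓ : Summable fun d => |κ4 ℓ d (d + ℓ)| :=
    hκsum.comp_injective (lag_triple_injective ℓ)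
  unfold lagCovBound
  simpa only [sub_eq_add_neg] using (hκℓ.add hγ).add (summable_abs_mul_shift hγ ℓ (-ℓ))

theorem tsum_lagCovBound_le (hγ : Summable fun ℓ : ℤ => R ℓ ^ 2)
    (hκsum : Summable fun t : ℤ × ℤ × ℤ => |κ4 t.1 t.2.1 t.2.2|) (ℓ : ℤ) :
    ∑' d, lagCovBound κ4 R ℓ d
      ≤ (∑' t : ℤ × ℤ × ℤ, |κ4 t.1 t.2.1 t.2.2|) + 2 * ∑' ℓ' : ℤ, R ℓ' ^ 2 := by
  have hκℓ : Summable fun d => |κ4 ℓ d (d + ℓ)| :=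
    hκsum.comp_injective (lag_triple_injective ℓ)
  have hκle : ∑' d, |κ4 ℓ d (d + ℓ)| ≤ ∑' t : ℤ × ℤ × ℤ, |κ4 t.1 t.2.1 t.2.2| :=
    tsum_comp_le_tsum_of_inj hκsum (fun _ => abs_nonneg _) (lag_triple_injective ℓ)
  have hRle := tsum_abs_mul_shift_le hγ ℓ (-ℓ)
  simp only [lagCovBound, sub_eq_add_neg]
  rw [(hκℓ.add hγ).tsum_add (summable_abs_mul_shift hγ ℓ (-ℓ)), hκℓ.tsum_add hγ]
  linarith

end LagCovBound

section LagProducts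

variable {Ω : Type*} [MeasurableSpace Ω] {μ : Measure Ω}
  {X : ℤ → Ω → ℝ} {R : ℤ → ℝ} {κ4 : ℤ → ℤ → ℤ → ℝ}

theorem memLp_two_mul
    (hint4 : ∀ i j k l : ℤ, Integrable (fun ω => X i ω * X j ω * X k ω * X l ω) μ)
    (hint2 : ∀ i j : ℤ, Integrable (fun ω => X i ω * X j ω) μ) (i j : ℤ) :
    MemLp (fun ω => X i ω * X j ω) 2 μ := by
  rw [memLp_two_iff_integrable_sq (hint2 i j).aestronglyMeasurable]
  convert hint4 i j i j using 2 with ω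
  ring

variable [IsProbabilityMeasure μ]

theorem covariance_lagProduct
    (hint4 : ∀ i j k l : ℤ, Integrable (fun ω => X i ω * X j ω * X k ω * X l ω) μ)
    (hint2 : ∀ i j : ℤ, Integrable (fun ω => X i ω * X j ω) μ)
    (hstat2 : ∀ t s : ℤ, ∫ ω, X t ω * X (t + s) ω ∂μ = R s)
    (hstat4 : ∀ t i j k : ℤ,
      ∫ ω, X t ω * X (t + i) ω * X (t + j) ω * X (t + k) ω ∂μ
        = ∫ ω, X 0 ω * X i ω * X j ω * X k ω ∂μ)
    (hκ : ∀ i j k : ℤ, κ4 i j k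
        = (∫ ω, X 0 ω * X i ω * X j ω * X k ω ∂μ)
          - R i * R (k - j) - R j * R (k - i) - R k * R (j - i))
    (ℓ j d : ℤ) :
    cov[fun ω => X j ω * X (j + ℓ) ω, fun ω => X (j + d) ω * X (j + d + ℓ) ω; μ]
      = κ4 ℓ d (d + ℓ) + R d ^ 2 + R (d + ℓ) * R (d - ℓ) := by
  have hprod : ∫ ω, X j ω * X (j + ℓ) ω * (X (j + d) ω * X (j + d + ℓ) ω) ∂μ
      = ∫ ω, X 0 ω * X ℓ ω * X d ω * X (d + ℓ) ω ∂μ := by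
    rw [← hstat4 j ℓ d (d + ℓ)]
    congr 1 with ω
    rw [← add_assoc]
    ring
  rw [covariance_eq_sub (memLp_two_mul hint4 hint2 _ _) (memLp_two_mul hint4 hint2 _ _)]
  simp only [Pi.mul_apply]
  rw [hprod, hstat2, hstat2, hκ, add_sub_cancel_left, add_sub_cancel_right]
  ring

end LagProducts

theorem stmt1_general
    {Ω : Type*} [MeasurableSpace Ω] (μ : Measure Ω) [IsProbabilityMeasure μ]
    (X : ℤ → Ω → ℝ) (R : ℤ → ℝ) (κ4 : ℤ → ℤ → ℤ → ℝ)
    (hint4 : ∀ i j k l : ℤ, Integrable (fun ω => X i ω * X j ω * X k ω * X l ω) μ)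
    (hint2 : ∀ i j : ℤ, Integrable (fun ω => X i ω * X j ω) μ)
    (hstat2 : ∀ t s : ℤ, ∫ ω, X t ω * X (t + s) ω ∂μ = R s)
    (hstat4 : ∀ t i j k : ℤ,
      ∫ ω, X t ω * X (t + i) ω * X (t + j) ω * X (t + k) ω ∂μ
        = ∫ ω, X 0 ω * X i ω * X j ω * X k ω ∂μ)
    (hκ : ∀ i j k : ℤ, κ4 i j k
        = (∫ ω, X 0 ω * X i ω * X j ω * X k ω ∂μ)
          - R i * R (k - j) - R j * R (k - i) - R k * R (j - i))
    (hγ : Summable (fun ℓ : ℤ => R ℓ ^ 2))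
    (hκsum : Summable (fun t : ℤ × ℤ × ℤ => |κ4 t.1 t.2.1 t.2.2|))
    (Rhat : ℕ → ℤ → Ω → ℝ)
    (hRhat : ∀ (n : ℕ) (ℓ : ℤ) (ω : Ω), Rhat n ℓ ω
      = (n : ℝ)⁻¹ * ∑ j ∈ Finset.Icc (max 1 (1 - ℓ)) (min ((n : ℤ) - ℓ) (n : ℤ)),
          X j ω * X (j + ℓ) ω) :
    ∀ n : ℕ, 1 ≤ n → ∀ ℓ : ℤ, 0 ≤ ℓ →
      (n : ℝ) * ∫ ω, (Rhat n ℓ ω - ∫ ω', Rhat n ℓ ω' ∂μ) ^ 2 ∂μ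
        ≤ (∑' t : ℤ × ℤ × ℤ, |κ4 t.1 t.2.1 t.2.2|) + 2 * ∑' ℓ' : ℤ, R ℓ' ^ 2 := by
  intro n hn ℓ _
  set s := Icc (max 1 (1 - ℓ)) (min ((n : ℤ) - ℓ) (n : ℤ))
  have hcard : #s ≤ n :=
    (card_le_card (Icc_subset_Icc (le_max_left _ _) (min_le_right _ _))).trans (by simp)
  have hn0 : (n : ℝ) ≠ 0 := Nat.cast_ne_zero.mpr (by omega)
  have hcov : ∀ j j', cov[fun ω => X j ω * X (j + ℓ) ω, fun ω => X j' ω * X (j' + ℓ) ω; μ]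
      ≤ lagCovBound κ4 R ℓ (j' - j) := by
    intro j j'
    obtain ⟨d, rfl⟩ : ∃ d, j' = j + d := ⟨j' - j, by ring⟩
    rw [covariance_lagProduct hint4 hint2 hstat2 hstat4 hκ, add_sub_cancel_left, lagCovBound]
    exact add_le_add (add_le_add (le_abs_self _) le_rfl) (le_abs_self _)
  simp only [hRhat n ℓ]
  rw [integral_sq_sub_integral_const_mul_sum s (fun j _ => memLp_two_mul hint4 hint2 j (j + ℓ))]
  calc _ ≤ (n : ℝ) * ((n : ℝ)⁻¹ ^ 2 * (#s * ∑' d, lagCovBound κ4 R ℓ d)) := by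
        gcongr
        exact sum_sum_le_card_mul_tsum s hcov (lagCovBound_nonneg κ4 R ℓ)
          (summable_lagCovBound hγ hκsum ℓ)
    _ = (#s / n : ℝ) * ∑' d, lagCovBound κ4 R ℓ d := by field_simp
    _ ≤ ∑' d, lagCovBound κ4 R ℓ d :=
        mul_le_of_le_one_left (tsum_nonneg (lagCovBound_nonneg κ4 R ℓ))
          (div_le_one_of_le₀ (by exact_mod_cast hcard) n.cast_nonneg)
    _ ≤ _ := tsum_lagCovBound_le hγ hκsum ℓ

/-- under Assumption M, `n · sup_{ℓ≥0} Var(R̂_n ℓ) ≤ κ₄ + 2γ`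
where `R̂_n(ℓ) = (1/n) Σ_{j=1∨(1−ℓ)}^{(n−ℓ)∧n} X_j X_{j+ℓ}`. -/
theorem stmt1
    {Ω : Type*} [MeasurableSpace Ω] (μ : Measure Ω) [IsProbabilityMeasure μ]
    (X : ℤ → Ω → ℝ) (R : ℤ → ℝ) (κ4 : ℤ → ℤ → ℤ → ℝ)
    (hmeas : ∀ i, Measurable (X i))
    (hint4 : ∀ i j k l : ℤ, Integrable (fun ω => X i ω * X j ω * X k ω * X l ω) μ)
    (hint2 : ∀ i j : ℤ, Integrable (fun ω => X i ω * X j ω) μ)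
    (hzero : ∀ i : ℤ, ∫ ω, X i ω ∂μ = 0)
    (hR : ∀ s : ℤ, R s = ∫ ω, X 0 ω * X s ω ∂μ)
    (hstat2 : ∀ t s : ℤ, ∫ ω, X t ω * X (t + s) ω ∂μ = R s)
    (hstat4 : ∀ t i j k : ℤ,
      ∫ ω, X t ω * X (t + i) ω * X (t + j) ω * X (t + k) ω ∂μ
        = ∫ ω, X 0 ω * X i ω * X j ω * X k ω ∂μ)
    (hκ : ∀ i j k : ℤ, κ4 i j k
        = (∫ ω, X 0 ω * X i ω * X j ω * X k ω ∂μ)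
          - R i * R (k - j) - R j * R (k - i) - R k * R (j - i))
    (hγ : Summable (fun ℓ : ℤ => R ℓ ^ 2))
    (hκsum : Summable (fun t : ℤ × ℤ × ℤ => |κ4 t.1 t.2.1 t.2.2|))
    (Rhat : ℕ → ℤ → Ω → ℝ)
    (hRhat : ∀ (n : ℕ) (ℓ : ℤ) (ω : Ω), Rhat n ℓ ω
      = (n : ℝ)⁻¹ * ∑ j ∈ Finset.Icc (max 1 (1 - ℓ)) (min ((n : ℤ) - ℓ) (n : ℤ)),
          X j ω * X (j + ℓ) ω) :
    ∀ n : ℕ, 1 ≤ n → ∀ ℓ : ℤ, 0 ≤ ℓ →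
      (n : ℝ) * ∫ ω, (Rhat n ℓ ω - ∫ ω', Rhat n ℓ ω' ∂μ) ^ 2 ∂μ
        ≤ (∑' t : ℤ × ℤ × ℤ, |κ4 t.1 t.2.1 t.2.2|) + 2 * ∑' ℓ' : ℤ, R ℓ' ^ 2 :=
  stmt1_general μ X R κ4 hint4 hint2 hstat2 hstat4 hκ hγ hκsum Rhat hRhat
end

section
/- Let (X_i)_{i∈ℤ} be an ℝ^d-valued L^p-stationary θ-weakly dependent time series (p > 1) with weak dependence coefficients (θ_r), and let h: ℝ^d → ℝ satisfy |h(x)| ≤ c‖x‖^a and |h(x)−h(y)| ≤ c‖x−y‖(‖x‖^{a−1}+‖y‖^{a−1}) for some c > 0 and 1 ≤ a < p. Then Y_i = h(X_i) defines a θ-weakly dependent time series with coefficients θ^Y_r ≤ C·θ_r^{(p−a)/(p−1)} for some constant C > 0. -/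
open MeasureTheory Filter

namespace Stmt11Aux

noncomputable def trunc {d : ℕ} (M : ℝ) (x : Fin d → ℝ) : Fin d → ℝ :=
  fun i => max (-M) (min (x i) M)

lemma clamp_abs_le_self (M s : ℝ) (hM : 0 ≤ M) : |max (-M) (min s M)| ≤ |s| := by
  rcases le_total s (-M) with h | h
  · rw [min_eq_left (by linarith), max_eq_left h, abs_neg, abs_of_nonneg hM,
      abs_of_nonpos (by linarith)]
    linarith
  · rcases le_total s M with h2 | h2
    · rw [min_eq_left h2, max_eq_right (by linarith)]
    · rw [min_eq_right h2, max_eq_right (by linarith), abs_of_nonneg hM]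
      exact le_trans h2 (le_abs_self s)

lemma clamp_abs_le (M s : ℝ) (hM : 0 ≤ M) : |max (-M) (min s M)| ≤ M := by
  rw [abs_le]
  refine ⟨le_max_left _ _, max_le (by linarith) (min_le_right _ _)⟩

lemma clamp_sub_abs_le (M s : ℝ) (hM : 0 ≤ M) : |s - max (-M) (min s M)| ≤ |s| := by
  rcases le_total s (-M) with h | h
  · rw [min_eq_left (by linarith), max_eq_left h]
    rw [abs_of_nonpos (by linarith), abs_of_nonpos (by linarith)]; linarith
  · rcases le_total s M with h2 | h2
    · rw [min_eq_left h2, max_eq_right h]; simp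
    · rw [min_eq_right h2, max_eq_right (by linarith)]
      rw [abs_of_nonneg (by linarith), abs_of_nonneg (by linarith)]; linarith

lemma clamp_eq (M s : ℝ) (h : |s| ≤ M) : max (-M) (min s M) = s := by
  rw [abs_le] at h
  rw [min_eq_left h.2, max_eq_right h.1]

lemma clamp_lip (M s t : ℝ) : |max (-M) (min s M) - max (-M) (min t M)| ≤ |s - t| := by
  calc |max (-M) (min s M) - max (-M) (min t M)|
      = |max (min s M) (-M) - max (min t M) (-M)| := by rw [max_comm (-M), max_comm (-M)]
    _ ≤ |min s M - min t M| := abs_max_sub_max_le_abs _ _ _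
    _ ≤ max |s - t| |M - M| := abs_min_sub_min_le_max _ _ _ _
    _ ≤ |s - t| := by simp

end Stmt11Aux

namespace Stmt11Aux
variable {d : ℕ}

lemma trunc_norm_le (M : ℝ) (hM : 0 ≤ M) (x : Fin d → ℝ) : ‖trunc M x‖ ≤ M := by
  rw [pi_norm_le_iff_of_nonneg hM]
  intro i; rw [Real.norm_eq_abs]; exact clamp_abs_le M (x i) hM

lemma trunc_norm_le_self (M : ℝ) (hM : 0 ≤ M) (x : Fin d → ℝ) : ‖trunc M x‖ ≤ ‖x‖ := by
  rw [pi_norm_le_iff_of_nonneg (norm_nonneg x)]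
  intro i; rw [Real.norm_eq_abs]
  exact le_trans (clamp_abs_le_self M (x i) hM) (norm_le_pi_norm x i)

lemma sub_trunc_norm_le (M : ℝ) (hM : 0 ≤ M) (x : Fin d → ℝ) : ‖x - trunc M x‖ ≤ ‖x‖ := by
  rw [pi_norm_le_iff_of_nonneg (norm_nonneg x)]
  intro i; rw [Pi.sub_apply, Real.norm_eq_abs]
  exact le_trans (clamp_sub_abs_le M (x i) hM) (norm_le_pi_norm x i)

lemma trunc_eq (M : ℝ) (x : Fin d → ℝ) (h : ‖x‖ ≤ M) : trunc M x = x := by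
  funext i
  exact clamp_eq M (x i) (le_trans (norm_le_pi_norm x i) h)

lemma trunc_lip (M : ℝ) (x y : Fin d → ℝ) : ‖trunc M x - trunc M y‖ ≤ ‖x - y‖ := by
  rw [pi_norm_le_iff_of_nonneg (norm_nonneg _)]
  intro i; rw [Pi.sub_apply, Real.norm_eq_abs]
  exact le_trans (clamp_lip M (x i) (y i)) (norm_le_pi_norm (x - y) i)

lemma trunc_measurable (M : ℝ) : Measurable (trunc (d := d) M) := by
  rw [measurable_pi_iff]
  intro i
  exact measurable_const.max ((measurable_pi_apply i).min measurable_const)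

lemma h_continuous (h : (Fin d → ℝ) → ℝ) (c a : ℝ) (hc : 0 < c) (ha : 1 ≤ a)
    (hlip : ∀ x y, |h x - h y| ≤ c * ‖x - y‖ * (‖x‖ ^ (a - 1) + ‖y‖ ^ (a - 1))) :
    Continuous h := by
  rw [Metric.continuous_iff]
  intro x ε hε
  set B : ℝ := 2 * c * (‖x‖ + 1) ^ (a - 1) + 1 with hB
  have hBpos : 0 < B := by
    have : (0:ℝ) < (‖x‖ + 1) ^ (a - 1) :=
      Real.rpow_pos_of_pos (by positivity) _
    positivity
  refine ⟨min 1 (ε / B), by positivity, fun y hy => ?_⟩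
  rw [dist_eq_norm] at hy
  have h1 : ‖y - x‖ < 1 := lt_of_lt_of_le hy (min_le_left _ _)
  have h2 : ‖y - x‖ < ε / B := lt_of_lt_of_le hy (min_le_right _ _)
  have hynorm : ‖y‖ ≤ ‖x‖ + 1 := by
    have := norm_sub_norm_le y x
    linarith
  have hya : ‖y‖ ^ (a - 1) ≤ (‖x‖ + 1) ^ (a - 1) :=
    Real.rpow_le_rpow (norm_nonneg _) hynorm (by linarith)
  have hxa : ‖x‖ ^ (a - 1) ≤ (‖x‖ + 1) ^ (a - 1) :=
    Real.rpow_le_rpow (norm_nonneg _) (by linarith) (by linarith)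
  rw [Real.dist_eq]
  have key := hlip y x
  have hnn : (0:ℝ) ≤ ‖y - x‖ := norm_nonneg _
  have hεB : ‖y - x‖ * B < ε := by
    have := mul_lt_mul_of_pos_right h2 hBpos
    rwa [div_mul_cancel₀ _ (ne_of_gt hBpos)] at this
  calc |h y - h x| ≤ c * ‖y - x‖ * (‖y‖ ^ (a - 1) + ‖x‖ ^ (a - 1)) := key
    _ ≤ c * ‖y - x‖ * (2 * (‖x‖ + 1) ^ (a - 1)) :=
        mul_le_mul_of_nonneg_left (by linarith) (by positivity)
    _ = ‖y - x‖ * (2 * c * (‖x‖ + 1) ^ (a - 1)) := by ring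
    _ ≤ ‖y - x‖ * B := mul_le_mul_of_nonneg_left (by rw [hB]; linarith) hnn
    _ < ε := hεB

lemma f2_continuous (f : ℝ → ℝ → ℝ) (Lf : ℝ) (hLf : 0 ≤ Lf)
    (hflip : ∀ x y x' y', |f x y - f x' y'| ≤ Lf * (|x - x'| + |y - y'|)) :
    Continuous (fun q : ℝ × ℝ => f q.1 q.2) := by
  have : LipschitzWith (2 * Lf).toNNReal (fun q : ℝ × ℝ => f q.1 q.2) := by
    apply LipschitzWith.of_dist_le_mul
    intro q q'
    rw [Real.coe_toNNReal _ (by linarith)]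
    rw [Real.dist_eq, Prod.dist_eq]
    have h1 : dist q.1 q'.1 ≤ max (dist q.1 q'.1) (dist q.2 q'.2) := le_max_left _ _
    have h2 : dist q.2 q'.2 ≤ max (dist q.1 q'.1) (dist q.2 q'.2) := le_max_right _ _
    have := hflip q.1 q.2 q'.1 q'.2
    rw [Real.dist_eq, Real.dist_eq] at h1 h2 ⊢
    nlinarith [abs_nonneg (q.1 - q'.1), abs_nonneg (q.2 - q'.2)]
  exact this.continuous

lemma err_bound (h : (Fin d → ℝ) → ℝ) (c a p M : ℝ) (hc : 0 < c) (ha : 1 ≤ a)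
    (hap : a < p) (hM : 0 < M)
    (hlip : ∀ x y, |h x - h y| ≤ c * ‖x - y‖ * (‖x‖ ^ (a - 1) + ‖y‖ ^ (a - 1)))
    (x : Fin d → ℝ) :
    |h x - h (trunc M x)| ≤ 2 * c * M ^ (a - p) * ‖x‖ ^ p := by
  rcases le_or_gt ‖x‖ M with hx | hx
  · rw [trunc_eq M x hx, sub_self, abs_zero]
    have h1 : (0:ℝ) ≤ M ^ (a - p) := (Real.rpow_pos_of_pos hM _).le
    have h2 : (0:ℝ) ≤ ‖x‖ ^ p := Real.rpow_nonneg (norm_nonneg _) _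
    positivity
  · have hx0 : (0:ℝ) < ‖x‖ := lt_trans hM hx
    have key := hlip x (trunc M x)
    have e1 : ‖trunc M x‖ ^ (a - 1) ≤ ‖x‖ ^ (a - 1) :=
      Real.rpow_le_rpow (norm_nonneg _) (trunc_norm_le_self M hM.le x) (by linarith)
    have e2 : ‖x - trunc M x‖ ≤ ‖x‖ := sub_trunc_norm_le M hM.le x
    have e3 : ‖x‖ ^ a = ‖x‖ * ‖x‖ ^ (a - 1) := by
      have := Real.rpow_add hx0 1 (a - 1)
      rw [show (1:ℝ) + (a - 1) = a by ring, Real.rpow_one] at this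
      exact this
    have hnn1 : (0:ℝ) ≤ ‖x‖ ^ (a - 1) := Real.rpow_nonneg (norm_nonneg _) _
    have step1 : |h x - h (trunc M x)| ≤ 2 * c * ‖x‖ ^ a := by
      calc |h x - h (trunc M x)|
          ≤ c * ‖x - trunc M x‖ * (‖x‖ ^ (a - 1) + ‖trunc M x‖ ^ (a - 1)) := key
        _ ≤ c * ‖x - trunc M x‖ * (2 * ‖x‖ ^ (a - 1)) :=
            mul_le_mul_of_nonneg_left (by linarith) (by positivity)
        _ ≤ c * ‖x‖ * (2 * ‖x‖ ^ (a - 1)) :=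
            mul_le_mul_of_nonneg_right (mul_le_mul_of_nonneg_left e2 hc.le) (by positivity)
        _ = 2 * c * ‖x‖ ^ a := by rw [e3]; ring
    have e4 : ‖x‖ ^ a = ‖x‖ ^ p * ‖x‖ ^ (a - p) := by
      have := Real.rpow_add hx0 p (a - p)
      rw [show p + (a - p) = a by ring] at this
      exact this
    have e5 : ‖x‖ ^ (a - p) ≤ M ^ (a - p) :=
      Real.rpow_le_rpow_of_nonpos hM hx.le (by linarith)
    have hnn3 : (0:ℝ) ≤ ‖x‖ ^ p := Real.rpow_nonneg (norm_nonneg _) _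
    calc |h x - h (trunc M x)| ≤ 2 * c * ‖x‖ ^ a := step1
      _ = 2 * c * (‖x‖ ^ p * ‖x‖ ^ (a - p)) := by rw [e4]
      _ ≤ 2 * c * (‖x‖ ^ p * M ^ (a - p)) :=
          mul_le_mul_of_nonneg_left (mul_le_mul_of_nonneg_left e5 hnn3) (by positivity)
      _ = 2 * c * M ^ (a - p) * ‖x‖ ^ p := by ring

lemma trunc_h_lip (h : (Fin d → ℝ) → ℝ) (c a M : ℝ) (hc : 0 < c) (ha : 1 ≤ a) (hM : 0 < M)
    (hlip : ∀ x y, |h x - h y| ≤ c * ‖x - y‖ * (‖x‖ ^ (a - 1) + ‖y‖ ^ (a - 1)))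
    (x y : Fin d → ℝ) :
    |h (trunc M x) - h (trunc M y)| ≤ 2 * c * M ^ (a - 1) * ‖x - y‖ := by
  have key := hlip (trunc M x) (trunc M y)
  have e1 : ‖trunc M x‖ ^ (a - 1) ≤ M ^ (a - 1) :=
    Real.rpow_le_rpow (norm_nonneg _) (trunc_norm_le M hM.le x) (by linarith)
  have e2 : ‖trunc M y‖ ^ (a - 1) ≤ M ^ (a - 1) :=
    Real.rpow_le_rpow (norm_nonneg _) (trunc_norm_le M hM.le y) (by linarith)
  have e3 : ‖trunc M x - trunc M y‖ ≤ ‖x - y‖ := trunc_lip M x y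
  have hnn1 : (0:ℝ) ≤ ‖trunc M x‖ ^ (a - 1) := Real.rpow_nonneg (norm_nonneg _) _
  have hnn2 : (0:ℝ) ≤ ‖trunc M y‖ ^ (a - 1) := Real.rpow_nonneg (norm_nonneg _) _
  have hMnn : (0:ℝ) ≤ M ^ (a - 1) := Real.rpow_nonneg hM.le _
  calc |h (trunc M x) - h (trunc M y)|
      ≤ c * ‖trunc M x - trunc M y‖ * (‖trunc M x‖ ^ (a - 1) + ‖trunc M y‖ ^ (a - 1)) := key
    _ ≤ c * ‖trunc M x - trunc M y‖ * (2 * M ^ (a - 1)) :=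
        mul_le_mul_of_nonneg_left (by linarith) (by positivity)
    _ ≤ c * ‖x - y‖ * (2 * M ^ (a - 1)) :=
        mul_le_mul_of_nonneg_right (mul_le_mul_of_nonneg_left e3 hc.le) (by positivity)
    _ = 2 * c * M ^ (a - 1) * ‖x - y‖ := by ring

end Stmt11Aux

open Stmt11Aux

/-- if `(X_i)` is an `ℝ^d`-valued `L^p`-stationary θ-weakly dependent
time series and `h` satisfies `|h(x)| ≤ c‖x‖^a`, `|h(x)−h(y)| ≤ c‖x−y‖(‖x‖^{a−1}+‖y‖^{a−1})`
with `1 ≤ a < p`, then `Y_i = h(X_i)` is θ-weakly dependent with coefficients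
`θ^Y_r ≤ C·θ_r^{(p−a)/(p−1)}`. -/
theorem stmt11
    {Ω : Type*} [MeasurableSpace Ω] (μ : Measure Ω) [IsProbabilityMeasure μ]
    (d : ℕ) (X : ℤ → Ω → (Fin d → ℝ)) (θ : ℕ → ℝ)
    (p a c : ℝ) (hp : 1 < p) (ha1 : 1 ≤ a) (hap : a < p) (hc : 0 < c)
    (hθpos : ∀ r, 0 < θ r) (hθ0 : Tendsto θ atTop (nhds 0))
    (hmeas : ∀ i, Measurable (X i))
    -- L^p stationarity
    (hXp : Integrable (fun ω => ‖X 0 ω‖ ^ p) μ)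
    (hstat : ∀ (t : ℤ) (n : ℕ) (idx : Fin n → ℤ),
      Measure.map (fun ω => fun i => X (idx i + t) ω) μ
        = Measure.map (fun ω => fun i => X (idx i) ω) μ)
    -- θ-weak dependence of X
    (hθdep : ∀ (r : ℕ) (j₁ j₂ : ℤ), (r : ℤ) ≤ j₁ → (r : ℤ) ≤ j₂ →
      ∀ (f : (Fin d → ℝ) → (Fin d → ℝ) → ℝ) (Lf : ℝ) (Z : Ω → ℝ),
        (∀ x y, |f x y| ≤ 1) →
        (∀ x y x' y', |f x y - f x' y'| ≤ Lf * (‖x - x'‖ + ‖y - y'‖)) →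
        Measurable[⨆ j ∈ {j : ℤ | j ≤ 0},
          MeasurableSpace.comap (X j) (inferInstance : MeasurableSpace (Fin d → ℝ))] Z →
        (∀ ω, |Z ω| ≤ 1) →
        |(∫ ω, f (X j₁ ω) (X j₂ ω) * Z ω ∂μ)
            - (∫ ω, f (X j₁ ω) (X j₂ ω) ∂μ) * ∫ ω, Z ω ∂μ| ≤ 2 * Lf * θ r)
    -- the function h and the process Y
    (h : (Fin d → ℝ) → ℝ) (Y : ℤ → Ω → ℝ)
    (hgrowth : ∀ x, |h x| ≤ c * ‖x‖ ^ a)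
    (hlip : ∀ x y, |h x - h y| ≤ c * ‖x - y‖ * (‖x‖ ^ (a - 1) + ‖y‖ ^ (a - 1)))
    (hY : ∀ i ω, Y i ω = h (X i ω)) :
    ∃ C : ℝ, 0 < C ∧
      ∀ (r : ℕ) (j₁ j₂ : ℤ), (r : ℤ) ≤ j₁ → (r : ℤ) ≤ j₂ →
        ∀ (f : ℝ → ℝ → ℝ) (Lf : ℝ) (Z : Ω → ℝ),
          (∀ x y, |f x y| ≤ 1) →
          (∀ x y x' y', |f x y - f x' y'| ≤ Lf * (|x - x'| + |y - y'|)) →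
          Measurable[⨆ j ∈ {j : ℤ | j ≤ 0},
            MeasurableSpace.comap (Y j) (inferInstance : MeasurableSpace ℝ)] Z →
          (∀ ω, |Z ω| ≤ 1) →
          |(∫ ω, f (Y j₁ ω) (Y j₂ ω) * Z ω ∂μ)
              - (∫ ω, f (Y j₁ ω) (Y j₂ ω) ∂μ) * ∫ ω, Z ω ∂μ|
            ≤ 2 * Lf * (C * θ r ^ ((p - a) / (p - 1))) := by
  -- continuity and measurability of h
  have hmeas_h : Measurable h := (h_continuous h c a hc ha1 hlip).measurable
  -- law of X j equals law of X 0
  have hlaw : ∀ j : ℤ, Measure.map (X j) μ = Measure.map (X 0) μ := by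
    intro j
    have h0 := hstat j 1 (fun _ => 0)
    simp only [zero_add] at h0
    have m1 : Measurable fun ω => (fun _ : Fin 1 => X j ω) := by
      rw [measurable_pi_iff]; intro _; exact hmeas j
    have m0 : Measurable fun ω => (fun _ : Fin 1 => X 0 ω) := by
      rw [measurable_pi_iff]; intro _; exact hmeas 0
    have e : Measurable (fun v : Fin 1 → (Fin d → ℝ) => v 0) := measurable_pi_apply 0
    calc Measure.map (X j) μ
        = Measure.map (fun v : Fin 1 → (Fin d → ℝ) => v 0)
            (Measure.map (fun ω => fun _ : Fin 1 => X j ω) μ) := by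
          rw [Measure.map_map e m1]; rfl
      _ = Measure.map (fun v : Fin 1 → (Fin d → ℝ) => v 0)
            (Measure.map (fun ω => fun _ : Fin 1 => X 0 ω) μ) := by rw [h0]
      _ = Measure.map (X 0) μ := by rw [Measure.map_map e m0]; rfl
  have hgm : Measurable (fun v : Fin d → ℝ => ‖v‖ ^ p) :=
    (continuous_norm.rpow_const (fun _ => Or.inr (by linarith))).measurable
  have hintp : ∀ j : ℤ, Integrable (fun ω => ‖X j ω‖ ^ p) μ := by
    intro j
    have i0 : Integrable (fun v : Fin d → ℝ => ‖v‖ ^ p) (Measure.map (X 0) μ) :=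
      (integrable_map_measure hgm.aestronglyMeasurable (hmeas 0).aemeasurable).mpr hXp
    have ij : Integrable (fun v : Fin d → ℝ => ‖v‖ ^ p) (Measure.map (X j) μ) := by
      rw [hlaw j]; exact i0
    exact (integrable_map_measure hgm.aestronglyMeasurable (hmeas j).aemeasurable).mp ij
  have hKp : ∀ j : ℤ, ∫ ω, ‖X j ω‖ ^ p ∂μ = ∫ ω, ‖X 0 ω‖ ^ p ∂μ := by
    intro j
    calc ∫ ω, ‖X j ω‖ ^ p ∂μ
        = ∫ v, ‖v‖ ^ p ∂(Measure.map (X j) μ) :=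
          (integral_map (hmeas j).aemeasurable hgm.aestronglyMeasurable).symm
      _ = ∫ v, ‖v‖ ^ p ∂(Measure.map (X 0) μ) := by rw [hlaw j]
      _ = ∫ ω, ‖X 0 ω‖ ^ p ∂μ := integral_map (hmeas 0).aemeasurable hgm.aestronglyMeasurable
  set K : ℝ := ∫ ω, ‖X 0 ω‖ ^ p ∂μ with hKdef
  have hK0 : 0 ≤ K := integral_nonneg (fun ω => Real.rpow_nonneg (norm_nonneg _) _)
  have hp1 : p - 1 ≠ 0 := by intro hh; linarith
  have h1p : (1:ℝ) - p ≠ 0 := by intro hh; linarith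
  -- helper for integrability of bounded measurable functions
  have bdd_int : ∀ (W : Ω → ℝ) (b : ℝ), Measurable W → (∀ ω, |W ω| ≤ b) → Integrable W μ := by
    intro W b hWm hWb
    exact (integrable_const b).mono' hWm.aestronglyMeasurable
      (Filter.Eventually.of_forall (fun ω => by rw [Real.norm_eq_abs]; exact hWb ω))
  refine ⟨2 * c + 4 * c * K, by nlinarith, ?_⟩
  intro r j₁ j₂ hj₁ hj₂ f Lf Z hfbd hflip hZmeas hZbd
  have hLf : 0 ≤ Lf := by
    have h1 := hflip 0 0 1 0
    norm_num at h1
    exact le_trans (abs_nonneg _) h1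
  set M : ℝ := θ r ^ ((1:ℝ)/(1-p)) with hMdef
  have hθr : 0 < θ r := hθpos r
  have hMpos : 0 < M := Real.rpow_pos_of_pos hθr _
  set α : ℝ := (p - a)/(p - 1) with hαdef
  have id2 : M ^ (a - p) = θ r ^ α := by
    rw [hMdef, ← Real.rpow_mul hθr.le]
    congr 1
    rw [hαdef]
    field_simp
    ring
  have id1 : M ^ (a - 1) * θ r = θ r ^ α := by
    rw [hMdef, ← Real.rpow_mul hθr.le]
    calc θ r ^ ((1/(1-p)) * (a-1)) * θ r
        = θ r ^ ((1/(1-p)) * (a-1)) * θ r ^ (1:ℝ) := by rw [Real.rpow_one]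
      _ = θ r ^ ((1/(1-p)) * (a-1) + 1) := (Real.rpow_add hθr _ _).symm
      _ = θ r ^ α := by congr 1; rw [hαdef]; field_simp; ring
  -- the processes
  set F : Ω → ℝ := fun ω => f (h (X j₁ ω)) (h (X j₂ ω)) with hFdef
  set G : Ω → ℝ := fun ω => f (h (trunc M (X j₁ ω))) (h (trunc M (X j₂ ω))) with hGdef
  have hfc : Continuous (fun q : ℝ × ℝ => f q.1 q.2) := f2_continuous f Lf hLf hflip
  have hFm : Measurable F :=
    hfc.measurable.comp ((hmeas_h.comp (hmeas j₁)).prodMk (hmeas_h.comp (hmeas j₂)))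
  have hGm : Measurable G :=
    hfc.measurable.comp
      ((hmeas_h.comp ((trunc_measurable M).comp (hmeas j₁))).prodMk
        (hmeas_h.comp ((trunc_measurable M).comp (hmeas j₂))))
  -- Z is measurable for the X σ-algebra and the ambient one
  have hYeq : ∀ j : ℤ, Y j = h ∘ X j := fun j => funext (hY j)
  have hsubXY : (⨆ j ∈ {j : ℤ | j ≤ 0},
        MeasurableSpace.comap (Y j) (inferInstance : MeasurableSpace ℝ))
      ≤ ⨆ j ∈ {j : ℤ | j ≤ 0},
        MeasurableSpace.comap (X j) (inferInstance : MeasurableSpace (Fin d → ℝ)) := by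
    apply iSup₂_mono
    intro j hj
    rw [hYeq j, ← MeasurableSpace.comap_comp]
    exact MeasurableSpace.comap_mono hmeas_h.comap_le
  have hZX : Measurable[⨆ j ∈ {j : ℤ | j ≤ 0},
      MeasurableSpace.comap (X j) (inferInstance : MeasurableSpace (Fin d → ℝ))] Z :=
    hZmeas.mono hsubXY le_rfl
  have hsubamb : (⨆ j ∈ {j : ℤ | j ≤ 0},
      MeasurableSpace.comap (X j) (inferInstance : MeasurableSpace (Fin d → ℝ)))
      ≤ (inferInstance : MeasurableSpace Ω) := by
    apply iSup₂_le
    intro j hj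
    exact (hmeas j).comap_le
  have hZm : Measurable Z := hZX.mono hsubamb le_rfl
  -- integrabilities
  have hZint : Integrable Z μ := bdd_int Z 1 hZm hZbd
  have hFint : Integrable F μ := bdd_int F 1 hFm (fun ω => hfbd _ _)
  have hGint : Integrable G μ := bdd_int G 1 hGm (fun ω => hfbd _ _)
  have hFZint : Integrable (fun ω => F ω * Z ω) μ :=
    bdd_int _ 1 (hFm.mul hZm) (fun ω => by
      rw [abs_mul]
      exact mul_le_one₀ (hfbd _ _) (abs_nonneg _) (hZbd ω))
  have hGZint : Integrable (fun ω => G ω * Z ω) μ :=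
    bdd_int _ 1 (hGm.mul hZm) (fun ω => by
      rw [abs_mul]
      exact mul_le_one₀ (hfbd _ _) (abs_nonneg _) (hZbd ω))
  -- pointwise truncation error
  have hpt : ∀ ω, |F ω - G ω|
      ≤ Lf * (2*c*M^(a-p)*‖X j₁ ω‖^p + 2*c*M^(a-p)*‖X j₂ ω‖^p) := by
    intro ω
    calc |F ω - G ω|
        ≤ Lf * (|h (X j₁ ω) - h (trunc M (X j₁ ω))| + |h (X j₂ ω) - h (trunc M (X j₂ ω))|) :=
          hflip _ _ _ _
      _ ≤ Lf * (2*c*M^(a-p)*‖X j₁ ω‖^p + 2*c*M^(a-p)*‖X j₂ ω‖^p) :=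
          mul_le_mul_of_nonneg_left
            (add_le_add (err_bound h c a p M hc ha1 hap hMpos hlip _)
              (err_bound h c a p M hc ha1 hap hMpos hlip _)) hLf
  -- the integrable bound
  have hbound_int : Integrable
      (fun ω => Lf * (2*c*M^(a-p)*‖X j₁ ω‖^p + 2*c*M^(a-p)*‖X j₂ ω‖^p)) μ :=
    ((((hintp j₁).const_mul _).add ((hintp j₂).const_mul _)).const_mul Lf)
  have hbound_val : ∫ ω, Lf * (2*c*M^(a-p)*‖X j₁ ω‖^p + 2*c*M^(a-p)*‖X j₂ ω‖^p) ∂μ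
      = Lf * (2*c*M^(a-p)*K + 2*c*M^(a-p)*K) := by
    rw [integral_const_mul, integral_add ((hintp j₁).const_mul _) ((hintp j₂).const_mul _),
      integral_const_mul, integral_const_mul, hKp j₁, hKp j₂]
  set bnd : ℝ := Lf * (2*c*M^(a-p)*K + 2*c*M^(a-p)*K) with hbnddef
  have hbnd0 : 0 ≤ bnd := by
    have hM1 : (0:ℝ) ≤ M^(a-p) := (Real.rpow_pos_of_pos hMpos _).le
    rw [hbnddef]
    apply mul_nonneg hLf
    have h2 := mul_nonneg (mul_nonneg (by linarith : (0:ℝ) ≤ 2*c) hM1) hK0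
    linarith
  -- first error term
  have err1 : |(∫ ω, F ω * Z ω ∂μ) - ∫ ω, G ω * Z ω ∂μ| ≤ bnd := by
    rw [← integral_sub hFZint hGZint]
    have habs : |∫ ω, (F ω * Z ω - G ω * Z ω) ∂μ| ≤ ∫ ω, |F ω * Z ω - G ω * Z ω| ∂μ := by
      rw [← Real.norm_eq_abs]
      exact (norm_integral_le_integral_norm _).trans (le_of_eq (by simp [Real.norm_eq_abs]))
    refine habs.trans ?_
    rw [← hbound_val]
    apply integral_mono ((hFZint.sub hGZint).abs) hbound_int
    intro ω
    calc |F ω * Z ω - G ω * Z ω| = |F ω - G ω| * |Z ω| := by rw [← sub_mul, abs_mul]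
      _ ≤ |F ω - G ω| * 1 := mul_le_mul_of_nonneg_left (hZbd ω) (abs_nonneg _)
      _ = |F ω - G ω| := mul_one _
      _ ≤ _ := hpt ω
  -- second error term
  have err2 : |(∫ ω, G ω ∂μ) - ∫ ω, F ω ∂μ| ≤ bnd := by
    rw [← integral_sub hGint hFint]
    have habs : |∫ ω, (G ω - F ω) ∂μ| ≤ ∫ ω, |G ω - F ω| ∂μ := by
      rw [← Real.norm_eq_abs]
      exact (norm_integral_le_integral_norm _).trans (le_of_eq (by simp [Real.norm_eq_abs]))
    refine habs.trans ?_
    rw [← hbound_val]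
    apply integral_mono ((hGint.sub hFint).abs) hbound_int
    intro ω
    have hthis := hpt ω
    rw [abs_sub_comm] at hthis
    exact hthis
  have hZ1 : |∫ ω, Z ω ∂μ| ≤ 1 := by
    have habs : |∫ ω, Z ω ∂μ| ≤ ∫ ω, |Z ω| ∂μ := by
      rw [← Real.norm_eq_abs]
      exact (norm_integral_le_integral_norm _).trans (le_of_eq (by simp [Real.norm_eq_abs]))
    refine habs.trans ?_
    calc ∫ ω, |Z ω| ∂μ ≤ ∫ _ω, (1:ℝ) ∂μ := integral_mono hZint.abs (integrable_const 1) hZbd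
      _ = 1 := by simp
  have err3 : |(∫ ω, G ω ∂μ) * (∫ ω, Z ω ∂μ) - (∫ ω, F ω ∂μ) * ∫ ω, Z ω ∂μ| ≤ bnd := by
    rw [← sub_mul, abs_mul]
    calc |(∫ ω, G ω ∂μ) - ∫ ω, F ω ∂μ| * |∫ ω, Z ω ∂μ|
        ≤ bnd * 1 := mul_le_mul err2 hZ1 (abs_nonneg _) hbnd0
      _ = bnd := mul_one _
  -- the main term via θ-weak dependence of X
  have hflip' : ∀ x y x' y',
      |f (h (trunc M x)) (h (trunc M y)) - f (h (trunc M x')) (h (trunc M y'))|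
        ≤ (Lf * (2*c*M^(a-1))) * (‖x - x'‖ + ‖y - y'‖) := by
    intro x y x' y'
    calc |f (h (trunc M x)) (h (trunc M y)) - f (h (trunc M x')) (h (trunc M y'))|
        ≤ Lf * (|h (trunc M x) - h (trunc M x')| + |h (trunc M y) - h (trunc M y')|) :=
          hflip _ _ _ _
      _ ≤ Lf * (2*c*M^(a-1)*‖x - x'‖ + 2*c*M^(a-1)*‖y - y'‖) :=
          mul_le_mul_of_nonneg_left
            (add_le_add (trunc_h_lip h c a M hc ha1 hMpos hlip x x')
              (trunc_h_lip h c a M hc ha1 hMpos hlip y y')) hLf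
      _ = (Lf * (2*c*M^(a-1))) * (‖x - x'‖ + ‖y - y'‖) := by ring
  have main : |(∫ ω, G ω * Z ω ∂μ) - (∫ ω, G ω ∂μ) * ∫ ω, Z ω ∂μ|
      ≤ 2 * (Lf * (2*c*M^(a-1))) * θ r :=
    hθdep r j₁ j₂ hj₁ hj₂ (fun x y => f (h (trunc M x)) (h (trunc M y)))
      (Lf * (2*c*M^(a-1))) Z (fun x y => hfbd _ _) hflip' hZX hZbd
  -- assemble
  have goal_eq : (∫ ω, f (Y j₁ ω) (Y j₂ ω) * Z ω ∂μ) = ∫ ω, F ω * Z ω ∂μ := by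
    congr 1; funext ω; rw [hY j₁ ω, hY j₂ ω]
  have goal_eq2 : (∫ ω, f (Y j₁ ω) (Y j₂ ω) ∂μ) = ∫ ω, F ω ∂μ := by
    congr 1; funext ω; rw [hY j₁ ω, hY j₂ ω]
  rw [goal_eq, goal_eq2]
  have tri : |(∫ ω, F ω * Z ω ∂μ) - (∫ ω, F ω ∂μ) * ∫ ω, Z ω ∂μ|
      ≤ |(∫ ω, F ω * Z ω ∂μ) - ∫ ω, G ω * Z ω ∂μ|
        + |(∫ ω, G ω * Z ω ∂μ) - (∫ ω, G ω ∂μ) * ∫ ω, Z ω ∂μ|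
        + |(∫ ω, G ω ∂μ) * (∫ ω, Z ω ∂μ) - (∫ ω, F ω ∂μ) * ∫ ω, Z ω ∂μ| := by
    have t1 := abs_sub_le (∫ ω, F ω * Z ω ∂μ) (∫ ω, G ω * Z ω ∂μ)
      ((∫ ω, F ω ∂μ) * ∫ ω, Z ω ∂μ)
    have t2 := abs_sub_le (∫ ω, G ω * Z ω ∂μ) ((∫ ω, G ω ∂μ) * ∫ ω, Z ω ∂μ)
      ((∫ ω, F ω ∂μ) * ∫ ω, Z ω ∂μ)
    linarith
  calc |(∫ ω, F ω * Z ω ∂μ) - (∫ ω, F ω ∂μ) * ∫ ω, Z ω ∂μ|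
      ≤ _ := tri
    _ ≤ bnd + 2 * (Lf * (2*c*M^(a-1))) * θ r + bnd := by
      linarith [err1, main, err3]
    _ = 8*Lf*c*K*(M^(a-p)) + 4*Lf*c*(M^(a-1) * θ r) := by rw [hbnddef]; ring
    _ = 8*Lf*c*K*(θ r ^ α) + 4*Lf*c*(θ r ^ α) := by rw [id1, id2]
    _ = 2 * Lf * ((2 * c + 4 * c * K) * θ r ^ α) := by ring
end

section
/- Let (X_i)_{i∈ℤ} be an ℝ^d-valued L^p-stationary η-weakly dependent time series (p > 1) with coefficients (η_r), and let h: ℝ^d → ℝ satisfy |h(x)| ≤ c‖x‖^a and |h(x)−h(y)| ≤ c‖x−y‖(‖x‖^{a−1}+‖y‖^{a−1}) with 1 ≤ a < p. Then Y_i = h(X_i) is η-weakly dependent with coefficients η^Y_r ≤ C·η_r^{(p−a)/(p−1)} for some C > 0. -/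
open MeasureTheory Filter ProbabilityTheory Finset

/-!
Truncate each coordinate at level `M`. The truncated map `h ∘ piClamp M` is Lipschitz with
constant `2 c M ^ (a - 1)`, so the weak dependence of `X` bounds the covariances of the truncated
process by `O(M ^ (a - 1) η_r)`. Since `h ∘ piClamp M = h` on the ball of radius `M` and
`‖x‖ ^ a ≤ M ^ (a - p) ‖x‖ ^ p` outside it, truncation moves each covariance by
`O(M ^ (a - p) 𝔼‖X₀‖ ^ p)`. The level `M = η_r ^ (1 / (1 - p))` makes both errors equal to
`η_r ^ ((p - a) / (p - 1))`.
-/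

def piClamp {ι : Type*} (M : ℝ) (x : ι → ℝ) : ι → ℝ := fun i => max (-M) (min M (x i))

section Clamp

variable {ι : Type*}

lemma continuous_piClamp (M : ℝ) : Continuous (piClamp M : (ι → ℝ) → ι → ℝ) := by
  unfold piClamp; fun_prop

variable [Fintype ι]

lemma norm_piClamp_le {M : ℝ} (hM : 0 ≤ M) (x : ι → ℝ) : ‖piClamp M x‖ ≤ M :=
  (pi_norm_le_iff_of_nonneg hM).2 fun i => by
    rw [Real.norm_eq_abs, abs_le]
    exact ⟨le_max_left _ _, max_le (by linarith) (min_le_left _ _)⟩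

lemma norm_piClamp_sub_le (M : ℝ) (x y : ι → ℝ) : ‖piClamp M x - piClamp M y‖ ≤ ‖x - y‖ :=
  (pi_norm_le_iff_of_nonneg (norm_nonneg _)).2 fun i => by
    refine le_trans ?_ (norm_le_pi_norm (x - y) i)
    simp only [Pi.sub_apply, piClamp, Real.norm_eq_abs, abs_le]
    constructor <;> grind

lemma piClamp_of_norm_le {M : ℝ} {x : ι → ℝ} (hx : ‖x‖ ≤ M) : piClamp M x = x :=
  funext fun i => by
    have := abs_le.1 ((Real.norm_eq_abs _ ▸ norm_le_pi_norm x i).trans hx)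
    simp only [piClamp, min_eq_right this.2, max_eq_right this.1]

end Clamp

section PolynomialGrowth

lemma continuous_of_abs_sub_le_mul_norm_rpow {E : Type*} [SeminormedAddCommGroup E]
    {h : E → ℝ} {a c : ℝ} (ha : 1 ≤ a)
    (hlip : ∀ x y, |h x - h y| ≤ c * ‖x - y‖ * (‖x‖ ^ (a - 1) + ‖y‖ ^ (a - 1))) :
    Continuous h := by
  refine continuous_iff_continuousAt.2 fun x => tendsto_iff_dist_tendsto_zero.2 ?_
  have hbound : Continuous fun y => c * ‖y - x‖ * (‖y‖ ^ (a - 1) + ‖x‖ ^ (a - 1)) := by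
    have := Real.continuous_rpow_const (q := a - 1) (by linarith)
    fun_prop
  refine squeeze_zero (fun _ => dist_nonneg) (fun y => hlip y x) ?_
  simpa using hbound.tendsto x

variable {ι : Type*} [Fintype ι] {h : (ι → ℝ) → ℝ} {a c M p : ℝ}

lemma abs_comp_piClamp_sub_le (hc : 0 ≤ c) (ha : 1 ≤ a) (hM : 0 ≤ M)
    (hlip : ∀ x y, |h x - h y| ≤ c * ‖x - y‖ * (‖x‖ ^ (a - 1) + ‖y‖ ^ (a - 1))) (x y : ι → ℝ) :
    |h (piClamp M x) - h (piClamp M y)| ≤ 2 * c * M ^ (a - 1) * ‖x - y‖ := by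
  have hclamp : ∀ z : ι → ℝ, ‖piClamp M z‖ ^ (a - 1) ≤ M ^ (a - 1) := fun z =>
    Real.rpow_le_rpow (norm_nonneg _) (norm_piClamp_le hM z) (by linarith)
  calc _ ≤ c * ‖piClamp M x - piClamp M y‖
          * (‖piClamp M x‖ ^ (a - 1) + ‖piClamp M y‖ ^ (a - 1)) := hlip _ _
    _ ≤ c * ‖x - y‖ * (M ^ (a - 1) + M ^ (a - 1)) := by
        grw [norm_piClamp_sub_le, hclamp x, hclamp y]
    _ = 2 * c * M ^ (a - 1) * ‖x - y‖ := by ring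

lemma abs_sub_comp_piClamp_le (hc : 0 ≤ c) (ha : 0 ≤ a) (hap : a ≤ p) (hM : 0 < M)
    (hgrowth : ∀ x, |h x| ≤ c * ‖x‖ ^ a) (x : ι → ℝ) :
    |h x - h (piClamp M x)| ≤ 2 * c * M ^ (a - p) * ‖x‖ ^ p := by
  rcases le_or_gt ‖x‖ M with hx | hx
  · rw [piClamp_of_norm_le hx, sub_self, abs_zero]
    positivity
  have hxpos : 0 < ‖x‖ := hM.trans hx
  calc |h x - h (piClamp M x)| ≤ c * ‖x‖ ^ a + c * ‖piClamp M x‖ ^ a :=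
        (abs_sub _ _).trans (add_le_add (hgrowth _) (hgrowth _))
    _ ≤ 2 * c * ‖x‖ ^ (a - p) * ‖x‖ ^ p := by
        grw [norm_piClamp_le hM.le, hx, mul_assoc, ← Real.rpow_add hxpos, sub_add_cancel]
        linarith
    _ ≤ 2 * c * M ^ (a - p) * ‖x‖ ^ p := by
        grw [Real.rpow_le_rpow_of_nonpos hM hx.le (by linarith : a - p ≤ 0)]

end PolynomialGrowth

lemma rpow_rpow_one_div_one_sub_mul_self {η p : ℝ} (hη : 0 < η) (hp : p ≠ 1) (a : ℝ) :
    (η ^ (1 / (1 - p))) ^ (a - 1) * η = η ^ ((p - a) / (p - 1)) := by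
  have : 1 - p ≠ 0 := sub_ne_zero.2 hp.symm
  have : p - 1 ≠ 0 := sub_ne_zero.2 hp
  rw [← Real.rpow_mul hη.le, ← Real.rpow_add_one hη.ne']
  congr 1; field_simp; ring

lemma rpow_rpow_one_div_one_sub {η p : ℝ} (hη : 0 < η) (hp : p ≠ 1) (a : ℝ) :
    (η ^ (1 / (1 - p))) ^ (a - p) = η ^ ((p - a) / (p - 1)) := by
  have : 1 - p ≠ 0 := sub_ne_zero.2 hp.symm
  have : p - 1 ≠ 0 := sub_ne_zero.2 hp
  rw [← Real.rpow_mul hη.le]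
  congr 1; field_simp; ring

section SumLipschitz

variable {ι : Type*} [Fintype ι] {g : (ι → ℝ) → ℝ} {L : ℝ}

lemma abs_sub_le_mul_sum_of_norm_sub_le (hg : ∀ x y, |g x - g y| ≤ L * ∑ i, ‖x i - y i‖)
    {x y e : ι → ℝ} (he : ∀ i, ‖x i - y i‖ ≤ e i) : |g x - g y| ≤ L * ∑ i, e i := by
  rcases isEmpty_or_nonempty ι with hι | hι
  · simp [Subsingleton.elim x y]
  have hL : 0 ≤ L := by
    have h01 := (abs_nonneg _).trans (hg 0 1)
    simp only [Pi.zero_apply, Pi.one_apply, zero_sub, norm_neg, norm_one, sum_const,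
      card_univ, nsmul_eq_mul, mul_one] at h01
    exact nonneg_of_mul_nonneg_left h01 (by exact_mod_cast Fintype.card_pos)
  exact (hg x y).trans (mul_le_mul_of_nonneg_left (sum_le_sum fun i _ => he i) hL)

lemma continuous_of_abs_sub_le_mul_sum (hg : ∀ x y, |g x - g y| ≤ L * ∑ i, ‖x i - y i‖) :
    Continuous g := by
  refine (LipschitzWith.of_dist_le_mul fun x y => ?_).continuous
    (K := (L * Fintype.card ι).toNNReal)
  calc dist (g x) (g y) ≤ L * ∑ _i : ι, dist x y :=
        abs_sub_le_mul_sum_of_norm_sub_le hg fun i => dist_le_pi_dist x y i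
    _ ≤ (L * Fintype.card ι).toNNReal * dist x y := by
        rw [sum_const, card_univ, nsmul_eq_mul, ← mul_assoc]
        exact mul_le_mul_of_nonneg_right (Real.le_coe_toNNReal _) dist_nonneg

lemma abs_comp_sub_le_mul_mul_sum {E : Type*} [SeminormedAddCommGroup E] {ψ : E → ℝ} {ℓ : ℝ}
    (hg : ∀ x y, |g x - g y| ≤ L * ∑ i, ‖x i - y i‖) (hψ : ∀ x y, |ψ x - ψ y| ≤ ℓ * ‖x - y‖)
    (x y : ι → E) : |(g fun i => ψ (x i)) - g fun i => ψ (y i)| ≤ L * ℓ * ∑ i, ‖x i - y i‖ := by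
  rw [mul_assoc, mul_sum]
  exact abs_sub_le_mul_sum_of_norm_sub_le hg fun i => (Real.norm_eq_abs _).trans_le (hψ _ _)

end SumLipschitz

section Covariance

variable {Ω : Type*} [MeasurableSpace Ω] {μ : Measure Ω} [IsProbabilityMeasure μ]
  {f f' g g' : Ω → ℝ} {B₁ B₂ : ℝ}

lemma abs_integral_mul_sub_integral_mul_le (hf : Integrable f μ) (hg' : Integrable g' μ)
    (hf' : AEStronglyMeasurable f' μ) (hg : AEStronglyMeasurable g μ)
    (hf'B : ∀ ω, |f' ω| ≤ B₁) (hgB : ∀ ω, |g ω| ≤ B₂) :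
    |∫ ω, f ω * g ω ∂μ - ∫ ω, f' ω * g' ω ∂μ|
      ≤ (∫ ω, |f ω - f' ω| ∂μ) * B₂ + B₁ * ∫ ω, |g ω - g' ω| ∂μ := by
  have hf'i : Integrable f' μ := .of_bound hf' B₁ (ae_of_all _ hf'B)
  have hgi : Integrable g μ := .of_bound hg B₂ (ae_of_all _ hgB)
  have hΔf : Integrable (fun ω => |f ω - f' ω|) μ := (hf.sub hf'i).abs
  have hΔg : Integrable (fun ω => |g ω - g' ω|) μ := (hgi.sub hg').abs
  rw [← integral_sub (hf.mul_bdd hg (ae_of_all _ hgB)) (hg'.bdd_mul hf' (ae_of_all _ hf'B)),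
    ← integral_mul_const, ← integral_const_mul,
    ← integral_add (hΔf.mul_const _) (hΔg.const_mul _)]
  refine abs_integral_le_integral_abs.trans (integral_mono_of_nonneg
    (ae_of_all _ fun _ => abs_nonneg _) ((hΔf.mul_const _).add (hΔg.const_mul _))
    (ae_of_all _ fun ω => ?_))
  calc |f ω * g ω - f' ω * g' ω| = |(f ω - f' ω) * g ω + f' ω * (g ω - g' ω)| := by ring_nf
    _ ≤ |f ω - f' ω| * B₂ + B₁ * |g ω - g' ω| := by
      grw [abs_add_le, abs_mul, abs_mul, hgB ω, hf'B ω]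

lemma abs_integral_mul_integral_sub_le (hf : Integrable f μ) (hg' : Integrable g' μ)
    (hf' : AEStronglyMeasurable f' μ) (hg : AEStronglyMeasurable g μ)
    (hf'B : ∀ ω, |f' ω| ≤ B₁) (hgB : ∀ ω, |g ω| ≤ B₂) :
    |(∫ ω, f ω ∂μ) * (∫ ω, g ω ∂μ) - (∫ ω, f' ω ∂μ) * ∫ ω, g' ω ∂μ|
      ≤ (∫ ω, |f ω - f' ω| ∂μ) * B₂ + B₁ * ∫ ω, |g ω - g' ω| ∂μ := by
  have hf'i : Integrable f' μ := .of_bound hf' B₁ (ae_of_all _ hf'B)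
  have hgi : Integrable g μ := .of_bound hg B₂ (ae_of_all _ hgB)
  have hmean : ∀ {F : Ω → ℝ} {B : ℝ}, (∀ ω, |F ω| ≤ B) → |∫ ω, F ω ∂μ| ≤ B :=
    fun {F} _ hF => by
      simpa using norm_integral_le_of_norm_le_const (μ := μ) (f := F) (ae_of_all _ hF)
  have hΔ : ∀ {F F' : Ω → ℝ}, Integrable F μ → Integrable F' μ →
      |(∫ ω, F ω ∂μ) - ∫ ω, F' ω ∂μ| ≤ ∫ ω, |F ω - F' ω| ∂μ := fun hF hF' => by
    rw [← integral_sub hF hF']; exact abs_integral_le_integral_abs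
  calc _ = |((∫ ω, f ω ∂μ) - ∫ ω, f' ω ∂μ) * (∫ ω, g ω ∂μ)
          + (∫ ω, f' ω ∂μ) * ((∫ ω, g ω ∂μ) - ∫ ω, g' ω ∂μ)| := by ring_nf
    _ ≤ _ := by
      grw [abs_add_le, abs_mul, abs_mul, hΔ hf hf'i, hΔ hgi hg', hmean hgB, hmean hf'B]

lemma abs_cov_sub_cov_le (hf : Integrable f μ) (hg' : Integrable g' μ)
    (hf' : AEStronglyMeasurable f' μ) (hg : AEStronglyMeasurable g μ)
    (hf'B : ∀ ω, |f' ω| ≤ B₁) (hgB : ∀ ω, |g ω| ≤ B₂) :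
    |(∫ ω, f ω * g ω ∂μ - (∫ ω, f ω ∂μ) * ∫ ω, g ω ∂μ)
        - (∫ ω, f' ω * g' ω ∂μ - (∫ ω, f' ω ∂μ) * ∫ ω, g' ω ∂μ)|
      ≤ 2 * ((∫ ω, |f ω - f' ω| ∂μ) * B₂ + B₁ * ∫ ω, |g ω - g' ω| ∂μ) := by
  have h₁ := abs_integral_mul_sub_integral_mul_le hf hg' hf' hg hf'B hgB
  have h₂ := abs_integral_mul_integral_sub_le hf hg' hf' hg hf'B hgB
  rw [abs_le] at h₁ h₂ ⊢
  constructor <;> linarith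

end Covariance

section WeakDependence

variable {Ω : Type*} [MeasurableSpace Ω] {μ : Measure Ω}

def IsWeaklyDependent {E : Type*} [SeminormedAddCommGroup E] (μ : Measure Ω) (X : ℤ → Ω → E)
    (θ : ℕ → ℝ) : Prop :=
  ∀ (r u v : ℕ) (iidx : Fin u → ℤ) (jidx : Fin v → ℤ),
    Monotone iidx → Monotone jidx → (∀ (α : Fin u) (β : Fin v), iidx α + r ≤ jidx β) →
    ∀ (g₁ : (Fin u → E) → ℝ) (g₂ : (Fin v → E) → ℝ) (L₁ L₂ B₁ B₂ : ℝ),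
      (∀ x, |g₁ x| ≤ B₁) → (∀ x, |g₂ x| ≤ B₂) →
      (∀ x y, |g₁ x - g₁ y| ≤ L₁ * ∑ i, ‖x i - y i‖) →
      (∀ x y, |g₂ x - g₂ y| ≤ L₂ * ∑ i, ‖x i - y i‖) →
      |(∫ ω, g₁ (fun α => X (iidx α) ω) * g₂ (fun β => X (jidx β) ω) ∂μ)
          - (∫ ω, g₁ (fun α => X (iidx α) ω) ∂μ) * ∫ ω, g₂ (fun β => X (jidx β) ω) ∂μ|
        ≤ ((u : ℝ) * L₁ * B₂ + (v : ℝ) * L₂ * B₁) * θ r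

lemma identDistrib_of_stationary {E : Type*} [MeasurableSpace E] {X : ℤ → Ω → E}
    (hmeas : ∀ i, Measurable (X i))
    (hstat : ∀ (t : ℤ) (n : ℕ) (idx : Fin n → ℤ),
      Measure.map (fun ω => fun i => X (idx i + t) ω) μ
        = Measure.map (fun ω => fun i => X (idx i) ω) μ) (t : ℤ) :
    IdentDistrib (X t) (X 0) μ μ := by
  refine ⟨(hmeas t).aemeasurable, (hmeas 0).aemeasurable, ?_⟩
  have h₁ := congrArg (Measure.map fun v : Fin 1 → E => v 0) (hstat t 1 fun _ => 0)
  rwa [Measure.map_map (measurable_pi_apply 0) (measurable_pi_lambda _ fun _ => hmeas _),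
    Measure.map_map (measurable_pi_apply 0) (measurable_pi_lambda _ fun _ => hmeas _),
    zero_add] at h₁

lemma integral_abs_comp_sub_comp_le {ι E : Type*} [Fintype ι] [SeminormedAddCommGroup E]
    {Z : ι → Ω → E} {g : (ι → ℝ) → ℝ} {L : ℝ} (hg : ∀ x y, |g x - g y| ≤ L * ∑ i, ‖x i - y i‖)
    {φ ψ : E → ℝ} {κ p K : ℝ} (happrox : ∀ x, |φ x - ψ x| ≤ κ * ‖x‖ ^ p)
    (hmom : ∀ i, Integrable (fun ω => ‖Z i ω‖ ^ p) μ ∧ ∫ ω, ‖Z i ω‖ ^ p ∂μ = K) :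
    ∫ ω, |g (fun i => φ (Z i ω)) - g (fun i => ψ (Z i ω))| ∂μ
      ≤ Fintype.card ι * L * (κ * K) := by
  have hint : Integrable (fun ω => L * ∑ i, κ * ‖Z i ω‖ ^ p) μ :=
    (integrable_finsetSum _ fun i _ => (hmom i).1.const_mul κ).const_mul L
  calc _ ≤ ∫ ω, L * ∑ i, κ * ‖Z i ω‖ ^ p ∂μ :=
        integral_mono_of_nonneg (ae_of_all _ fun _ => abs_nonneg _) hint (ae_of_all _ fun ω =>
          abs_sub_le_mul_sum_of_norm_sub_le hg fun i => happrox (Z i ω))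
    _ = Fintype.card ι * L * (κ * K) := by
        rw [integral_const_mul, integral_finsetSum _ fun i _ => (hmom i).1.const_mul κ]
        simp only [integral_const_mul, (hmom _).2, sum_const, card_univ, nsmul_eq_mul]
        ring

variable [IsProbabilityMeasure μ]

theorem IsWeaklyDependent.comp_of_approx {E : Type*} [SeminormedAddCommGroup E]
    [MeasurableSpace E] {X : ℤ → Ω → E} {θ : ℕ → ℝ} (hX : IsWeaklyDependent μ X θ)
    (hmeas : ∀ i, Measurable (X i)) {p K : ℝ}
    (hmom : ∀ i, Integrable (fun ω => ‖X i ω‖ ^ p) μ ∧ ∫ ω, ‖X i ω‖ ^ p ∂μ = K)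
    {φ ψ : E → ℝ} {ℓ κ : ℝ} (hφ : Measurable φ) (hψ : Measurable ψ)
    (hψlip : ∀ x y, |ψ x - ψ y| ≤ ℓ * ‖x - y‖) (happrox : ∀ x, |φ x - ψ x| ≤ κ * ‖x‖ ^ p) :
    IsWeaklyDependent μ (fun i ω => φ (X i ω)) (fun r => ℓ * θ r + 2 * κ * K) := by
  intro r u v I J hI hJ hIJ g₁ g₂ L₁ L₂ B₁ B₂ hB₁ hB₂ hL₁ hL₂
  have hcov := hX r u v I J hI hJ hIJ (fun x => g₁ fun α => ψ (x α))
    (fun x => g₂ fun β => ψ (x β)) _ _ B₁ B₂ (fun _ => hB₁ _) (fun _ => hB₂ _)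
    (abs_comp_sub_le_mul_mul_sum hL₁ hψlip) (abs_comp_sub_le_mul_mul_sum hL₂ hψlip)
  have hmeasComp : ∀ {n : ℕ} {g : (Fin n → ℝ) → ℝ} {L : ℝ} {χ : E → ℝ} (I : Fin n → ℤ),
      (∀ x y, |g x - g y| ≤ L * ∑ i, ‖x i - y i‖) → Measurable χ →
      AEStronglyMeasurable (fun ω => g fun i => χ (X (I i) ω)) μ := fun I hg hχ =>
    ((continuous_of_abs_sub_le_mul_sum hg).measurable.comp
      (measurable_pi_lambda _ fun i => hχ.comp (hmeas (I i)))).aestronglyMeasurable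
  have hpert := abs_cov_sub_cov_le
    (Integrable.of_bound (hmeasComp I hL₁ hφ) B₁ (ae_of_all _ fun _ => hB₁ _))
    (Integrable.of_bound (hmeasComp J hL₂ hψ) B₂ (ae_of_all _ fun _ => hB₂ _))
    (hmeasComp I hL₁ hψ) (hmeasComp J hL₂ hφ) (fun _ => hB₁ _) (fun _ => hB₂ _)
  have herr₁ := integral_abs_comp_sub_comp_le (Z := fun α => X (I α)) hL₁ happrox fun _ => hmom _
  have herr₂ := integral_abs_comp_sub_comp_le (Z := fun β => X (J β)) hL₂ happrox fun _ => hmom _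
  have hB₁0 : 0 ≤ B₁ := (abs_nonneg _).trans (hB₁ 0)
  have hB₂0 : 0 ≤ B₂ := (abs_nonneg _).trans (hB₂ 0)
  simp only [Fintype.card_fin] at herr₁ herr₂
  have key := (abs_sub_abs_le_abs_sub _ _).trans hpert
  grw [herr₁, herr₂] at key
  linear_combination key + hcov

theorem IsWeaklyDependent.comp_of_growth {ι : Type*} [Fintype ι] {X : ℤ → Ω → (ι → ℝ)}
    {η : ℕ → ℝ} (hX : IsWeaklyDependent μ X η) (hη : ∀ r, 0 < η r)
    (hmeas : ∀ i, Measurable (X i))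
    (hstat : ∀ (t : ℤ) (n : ℕ) (idx : Fin n → ℤ),
      Measure.map (fun ω => fun i => X (idx i + t) ω) μ
        = Measure.map (fun ω => fun i => X (idx i) ω) μ)
    {h : (ι → ℝ) → ℝ} {a c p : ℝ} (ha : 1 ≤ a) (hap : a < p) (hc : 0 ≤ c)
    (hXp : Integrable (fun ω => ‖X 0 ω‖ ^ p) μ)
    (hgrowth : ∀ x, |h x| ≤ c * ‖x‖ ^ a)
    (hlip : ∀ x y, |h x - h y| ≤ c * ‖x - y‖ * (‖x‖ ^ (a - 1) + ‖y‖ ^ (a - 1))) :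
    IsWeaklyDependent μ (fun i ω => h (X i ω))
      (fun r => 2 * c * (1 + 2 * ∫ ω, ‖X 0 ω‖ ^ p ∂μ) * η r ^ ((p - a) / (p - 1))) := by
  have hp : p ≠ 1 := (ha.trans_lt hap).ne'
  have hmom : ∀ t, Integrable (fun ω => ‖X t ω‖ ^ p) μ
      ∧ ∫ ω, ‖X t ω‖ ^ p ∂μ = ∫ ω, ‖X 0 ω‖ ^ p ∂μ := fun t => by
    have hid := (identDistrib_of_stationary hmeas hstat t).comp
      ((Real.continuous_rpow_const (q := p) (by linarith)).measurable.comp measurable_norm)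
    exact ⟨hid.integrable_iff.2 hXp, hid.integral_eq⟩
  have hhcont := continuous_of_abs_sub_le_mul_norm_rpow ha hlip
  intro r
  set M := η r ^ (1 / (1 - p))
  have hM : 0 < M := Real.rpow_pos_of_pos (hη r) _
  have hdep := hX.comp_of_approx hmeas hmom hhcont.measurable
    (hhcont.comp (continuous_piClamp M)).measurable (abs_comp_piClamp_sub_le hc ha hM.le hlip)
    (abs_sub_comp_piClamp_le hc (by linarith) hap.le hM hgrowth) r
  have hrate : 2 * c * M ^ (a - 1) * η r + 2 * (2 * c * M ^ (a - p)) * ∫ ω, ‖X 0 ω‖ ^ p ∂μ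
      = 2 * c * (1 + 2 * ∫ ω, ‖X 0 ω‖ ^ p ∂μ) * η r ^ ((p - a) / (p - 1)) := by
    rw [mul_assoc _ _ (η r), rpow_rpow_one_div_one_sub_mul_self (hη r) hp,
      rpow_rpow_one_div_one_sub (hη r) hp]
    ring
  simpa only [hrate] using hdep

end WeakDependence

theorem stmt12_general
    {Ω : Type*} [MeasurableSpace Ω] (μ : Measure Ω) [IsProbabilityMeasure μ]
    (d : ℕ) (X : ℤ → Ω → (Fin d → ℝ)) (η : ℕ → ℝ)
    (p a c : ℝ) (ha1 : 1 ≤ a) (hap : a < p) (hc : 0 < c)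
    (hηpos : ∀ r, 0 < η r)
    (hmeas : ∀ i, Measurable (X i))
    (hXp : Integrable (fun ω => ‖X 0 ω‖ ^ p) μ)
    (hstat : ∀ (t : ℤ) (n : ℕ) (idx : Fin n → ℤ),
      Measure.map (fun ω => fun i => X (idx i + t) ω) μ
        = Measure.map (fun ω => fun i => X (idx i) ω) μ)
    -- η-weak dependence of X
    (hηdep : ∀ (r u v : ℕ) (iidx : Fin u → ℤ) (jidx : Fin v → ℤ),
      Monotone iidx → Monotone jidx →
      (∀ (α : Fin u) (β : Fin v), iidx α + r ≤ jidx β) →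
      ∀ (g₁ : (Fin u → (Fin d → ℝ)) → ℝ) (g₂ : (Fin v → (Fin d → ℝ)) → ℝ)
        (L₁ L₂ B₁ B₂ : ℝ),
        (∀ x, |g₁ x| ≤ B₁) → (∀ x, |g₂ x| ≤ B₂) →
        (∀ x y, |g₁ x - g₁ y| ≤ L₁ * ∑ i, ‖x i - y i‖) →
        (∀ x y, |g₂ x - g₂ y| ≤ L₂ * ∑ i, ‖x i - y i‖) →
        |(∫ ω, g₁ (fun α => X (iidx α) ω) * g₂ (fun β => X (jidx β) ω) ∂μ)
            - (∫ ω, g₁ (fun α => X (iidx α) ω) ∂μ) * ∫ ω, g₂ (fun β => X (jidx β) ω) ∂μ|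
          ≤ ((u : ℝ) * L₁ * B₂ + (v : ℝ) * L₂ * B₁) * η r)
    (h : (Fin d → ℝ) → ℝ) (Y : ℤ → Ω → ℝ)
    (hgrowth : ∀ x, |h x| ≤ c * ‖x‖ ^ a)
    (hlip : ∀ x y, |h x - h y| ≤ c * ‖x - y‖ * (‖x‖ ^ (a - 1) + ‖y‖ ^ (a - 1)))
    (hY : ∀ i ω, Y i ω = h (X i ω)) :
    ∃ C : ℝ, 0 < C ∧
      ∀ (r u v : ℕ) (iidx : Fin u → ℤ) (jidx : Fin v → ℤ),
        Monotone iidx → Monotone jidx →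
        (∀ (α : Fin u) (β : Fin v), iidx α + r ≤ jidx β) →
        ∀ (g₁ : (Fin u → ℝ) → ℝ) (g₂ : (Fin v → ℝ) → ℝ) (L₁ L₂ B₁ B₂ : ℝ),
          (∀ x, |g₁ x| ≤ B₁) → (∀ x, |g₂ x| ≤ B₂) →
          (∀ x y, |g₁ x - g₁ y| ≤ L₁ * ∑ i, |x i - y i|) →
          (∀ x y, |g₂ x - g₂ y| ≤ L₂ * ∑ i, |x i - y i|) →
          |(∫ ω, g₁ (fun α => Y (iidx α) ω) * g₂ (fun β => Y (jidx β) ω) ∂μ)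
              - (∫ ω, g₁ (fun α => Y (iidx α) ω) ∂μ) * ∫ ω, g₂ (fun β => Y (jidx β) ω) ∂μ|
            ≤ ((u : ℝ) * L₁ * B₂ + (v : ℝ) * L₂ * B₁) * (C * η r ^ ((p - a) / (p - 1))) := by
  obtain rfl : Y = fun i ω => h (X i ω) := funext₂ hY
  refine ⟨2 * c * (1 + 2 * ∫ ω, ‖X 0 ω‖ ^ p ∂μ), by positivity, ?_⟩
  simpa only [IsWeaklyDependent, Real.norm_eq_abs] using
    IsWeaklyDependent.comp_of_growth hηdep hηpos hmeas hstat ha1 hap hc.le hXp hgrowth hlip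

/-- if `(X_i)` is an `ℝ^d`-valued `L^p`-stationary η-weakly dependent
time series and `h` satisfies `|h(x)| ≤ c‖x‖^a`, `|h(x)−h(y)| ≤ c‖x−y‖(‖x‖^{a−1}+‖y‖^{a−1})`
with `1 ≤ a < p`, then `Y_i = h(X_i)` is η-weakly dependent with coefficients
`η^Y_r ≤ C·η_r^{(p−a)/(p−1)}`. -/
theorem stmt12
    {Ω : Type*} [MeasurableSpace Ω] (μ : Measure Ω) [IsProbabilityMeasure μ]
    (d : ℕ) (X : ℤ → Ω → (Fin d → ℝ)) (η : ℕ → ℝ)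
    (p a c : ℝ) (hp : 1 < p) (ha1 : 1 ≤ a) (hap : a < p) (hc : 0 < c)
    (hηpos : ∀ r, 0 < η r) (hη0 : Tendsto η atTop (nhds 0))
    (hmeas : ∀ i, Measurable (X i))
    (hXp : Integrable (fun ω => ‖X 0 ω‖ ^ p) μ)
    (hstat : ∀ (t : ℤ) (n : ℕ) (idx : Fin n → ℤ),
      Measure.map (fun ω => fun i => X (idx i + t) ω) μ
        = Measure.map (fun ω => fun i => X (idx i) ω) μ)
    -- η-weak dependence of X
    (hηdep : ∀ (r u v : ℕ) (iidx : Fin u → ℤ) (jidx : Fin v → ℤ),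
      Monotone iidx → Monotone jidx →
      (∀ (α : Fin u) (β : Fin v), iidx α + r ≤ jidx β) →
      ∀ (g₁ : (Fin u → (Fin d → ℝ)) → ℝ) (g₂ : (Fin v → (Fin d → ℝ)) → ℝ)
        (L₁ L₂ B₁ B₂ : ℝ),
        (∀ x, |g₁ x| ≤ B₁) → (∀ x, |g₂ x| ≤ B₂) →
        (∀ x y, |g₁ x - g₁ y| ≤ L₁ * ∑ i, ‖x i - y i‖) →
        (∀ x y, |g₂ x - g₂ y| ≤ L₂ * ∑ i, ‖x i - y i‖) →
        |(∫ ω, g₁ (fun α => X (iidx α) ω) * g₂ (fun β => X (jidx β) ω) ∂μ)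
            - (∫ ω, g₁ (fun α => X (iidx α) ω) ∂μ) * ∫ ω, g₂ (fun β => X (jidx β) ω) ∂μ|
          ≤ ((u : ℝ) * L₁ * B₂ + (v : ℝ) * L₂ * B₁) * η r)
    (h : (Fin d → ℝ) → ℝ) (Y : ℤ → Ω → ℝ)
    (hgrowth : ∀ x, |h x| ≤ c * ‖x‖ ^ a)
    (hlip : ∀ x y, |h x - h y| ≤ c * ‖x - y‖ * (‖x‖ ^ (a - 1) + ‖y‖ ^ (a - 1)))
    (hY : ∀ i ω, Y i ω = h (X i ω)) :
    ∃ C : ℝ, 0 < C ∧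
      ∀ (r u v : ℕ) (iidx : Fin u → ℤ) (jidx : Fin v → ℤ),
        Monotone iidx → Monotone jidx →
        (∀ (α : Fin u) (β : Fin v), iidx α + r ≤ jidx β) →
        ∀ (g₁ : (Fin u → ℝ) → ℝ) (g₂ : (Fin v → ℝ) → ℝ) (L₁ L₂ B₁ B₂ : ℝ),
          (∀ x, |g₁ x| ≤ B₁) → (∀ x, |g₂ x| ≤ B₂) →
          (∀ x y, |g₁ x - g₁ y| ≤ L₁ * ∑ i, |x i - y i|) →
          (∀ x y, |g₂ x - g₂ y| ≤ L₂ * ∑ i, |x i - y i|) →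
          |(∫ ω, g₁ (fun α => Y (iidx α) ω) * g₂ (fun β => Y (jidx β) ω) ∂μ)
              - (∫ ω, g₁ (fun α => Y (iidx α) ω) ∂μ) * ∫ ω, g₂ (fun β => Y (jidx β) ω) ∂μ|
            ≤ ((u : ℝ) * L₁ * B₂ + (v : ℝ) * L₂ * B₁) * (C * η r ^ ((p - a) / (p - 1))) :=
  stmt12_general μ d X η p a c ha1 hap hc hηpos hmeas hXp hstat hηdep h Y hgrowth hlip hY
end

section
/- Let X be an η-weakly dependent strictly stationary process with ‖X₀‖_m < ∞ for some m > 4 and η_r = O(r^{−α}) with α > 3. Then the covariogram satisfies |R(ℓ)| ≤ c·|ℓ|^{−α(m−2)/(m−1)} for some constant c > 0, and consequently Σ_{|ℓ|≥n} R(ℓ)² ≤ c'·n^{1 − 2α(m−2)/(m−1)}. -/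
/-!
Truncate at level `M`: `truncAt M` is bounded by `M` and `1`-Lipschitz, so η-weak dependence
bounds the covariance of `truncAt M X₀` and `truncAt M X_ℓ` by `2 M η_ℓ`. Pointwise Markov-type
estimates, the moment of order `m` and the centring show that truncation moves `E[X₀ X_ℓ]` and
the product of the means by `O(M^{2-m})`. The choice `M = ℓ^{α/(m-1)}` makes both errors
`O(ℓ^{-β})` with `β = α(m-2)/(m-1)`. For the tail, `R(ℓ)² ≤ c² n^{2-2β} ℓ^{-2}` when `|ℓ| ≥ n`,
and `∑_{|ℓ| ≥ n} ℓ^{-2} ≤ 4/n`.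
-/

open MeasureTheory ProbabilityTheory Finset

noncomputable def truncAt (M x : ℝ) : ℝ := max (-M) (min M x)

section Truncation

variable {M : ℝ}

lemma continuous_truncAt (M : ℝ) : Continuous (truncAt M) :=
  continuous_const.max (continuous_const.min continuous_id)

lemma abs_truncAt_le (hM : 0 ≤ M) (x : ℝ) : |truncAt M x| ≤ M :=
  abs_le.2 ⟨le_max_left _ _, max_le (by linarith) (min_le_left _ _)⟩

lemma abs_truncAt_sub_truncAt_le (M x y : ℝ) : |truncAt M x - truncAt M y| ≤ |x - y| :=
  (abs_max_sub_max_le_max _ _ _ _).trans <| max_le (by simp) <|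
    (abs_min_sub_min_le_max _ _ _ _).trans (by simp)

lemma truncAt_of_abs_le {x : ℝ} (h : |x| ≤ M) : truncAt M x = x := by
  rw [abs_le] at h
  rw [truncAt, min_eq_right h.2, max_eq_right h.1]

lemma abs_sub_truncAt_le_abs (hM : 0 ≤ M) (x : ℝ) : |x - truncAt M x| ≤ |x| := by
  simp only [truncAt, abs_le]
  constructor <;> cases le_total x 0 <;> cases le_total M x <;> cases le_total x (-M) <;>
    simp_all [abs_of_nonneg, abs_of_nonpos] <;> linarith

lemma le_rpow_add_div_rpow {z a p : ℝ} (hM : 0 < M) (hMz : M ≤ z) (hp : 0 ≤ p) :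
    z ^ a ≤ z ^ (a + p) / M ^ p := by
  have hz : 0 < z := hM.trans_le hMz
  rw [le_div_iff₀ (by positivity), Real.rpow_add hz]
  exact mul_le_mul_of_nonneg_left (Real.rpow_le_rpow hM.le hMz hp) (by positivity)

lemma abs_sub_truncAt_le (hM : 0 < M) {m : ℝ} (hm : 1 ≤ m) (x : ℝ) :
    |x - truncAt M x| ≤ |x| ^ m / M ^ (m - 1) := by
  rcases le_or_gt |x| M with h | h
  · rw [truncAt_of_abs_le h, sub_self, abs_zero]
    positivity
  calc |x - truncAt M x| ≤ |x| ^ (1 : ℝ) := by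
        rw [Real.rpow_one]; exact abs_sub_truncAt_le_abs hM.le x
    _ ≤ |x| ^ (1 + (m - 1)) / M ^ (m - 1) := le_rpow_add_div_rpow hM h.le (by linarith)
    _ = |x| ^ m / M ^ (m - 1) := by rw [add_sub_cancel]

lemma abs_mul_sub_truncAt_mul_le (hM : 0 < M) {m : ℝ} (hm : 2 ≤ m) (x y : ℝ) :
    |x * y - truncAt M x * truncAt M y| ≤ 2 * (|x| ^ m + |y| ^ m) / M ^ (m - 2) := by
  set z := max |x| |y|
  rcases le_or_gt z M with h | h
  · rw [truncAt_of_abs_le (le_of_max_le_left h), truncAt_of_abs_le (le_of_max_le_right h),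
      sub_self, abs_zero]
    positivity
  have hzm : z ^ m ≤ |x| ^ m + |y| ^ m := by
    have := Real.rpow_nonneg (abs_nonneg x) m
    have := Real.rpow_nonneg (abs_nonneg y) m
    rcases max_choice |x| |y| with h' | h' <;> simp only [z, h'] <;> linarith
  have hxz : |x| ≤ z := le_max_left _ _
  have hyz : |y| ≤ z := le_max_right _ _
  calc |x * y - truncAt M x * truncAt M y| ≤ |x * y| + |truncAt M x * truncAt M y| := abs_sub _ _
    _ ≤ z * z + M * M := by
        rw [abs_mul, abs_mul]
        gcongr
        · exact abs_truncAt_le hM.le x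
        · exact abs_truncAt_le hM.le y
    _ ≤ 2 * z ^ (2 : ℝ) := by rw [Real.rpow_two]; nlinarith
    _ ≤ 2 * (z ^ (2 + (m - 2)) / M ^ (m - 2)) := by
        gcongr; exact le_rpow_add_div_rpow hM h.le (by linarith)
    _ ≤ 2 * (|x| ^ m + |y| ^ m) / M ^ (m - 2) := by
        rw [add_sub_cancel, mul_div_assoc]; gcongr

end Truncation

section Moments

variable {Ω : Type*} [MeasurableSpace Ω] {μ : Measure Ω} {m M : ℝ} {U V : Ω → ℝ}

lemma memLp_of_integrable_abs_rpow (hU : AEStronglyMeasurable U μ) (hm : 0 < m)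
    (hUm : Integrable (fun ω => |U ω| ^ m) μ) : MemLp U (ENNReal.ofReal m) μ := by
  refine (integrable_norm_rpow_iff hU (by simpa using hm) ENNReal.ofReal_ne_top).1 ?_
  simpa [ENNReal.toReal_ofReal hm.le] using hUm

variable [IsFiniteMeasure μ]

lemma integrable_of_integrable_abs_rpow (hU : AEStronglyMeasurable U μ) (hm : 1 ≤ m)
    (hUm : Integrable (fun ω => |U ω| ^ m) μ) : Integrable U μ :=
  memLp_one_iff_integrable.1 <| (memLp_of_integrable_abs_rpow hU (by linarith) hUm).mono_exponent
    (by simpa using hm)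

lemma integrable_mul_of_integrable_abs_rpow (hU : AEStronglyMeasurable U μ)
    (hV : AEStronglyMeasurable V μ) (hm : 2 ≤ m) (hUm : Integrable (fun ω => |U ω| ^ m) μ)
    (hVm : Integrable (fun ω => |V ω| ^ m) μ) : Integrable (fun ω => U ω * V ω) μ := by
  have h2 : (2 : ENNReal) ≤ ENNReal.ofReal m := by simpa using hm
  exact ((memLp_of_integrable_abs_rpow hU (by linarith) hUm).mono_exponent h2).integrable_mul
    ((memLp_of_integrable_abs_rpow hV (by linarith) hVm).mono_exponent h2)

lemma integrable_truncAt_comp (hM : 0 ≤ M) (hU : AEStronglyMeasurable U μ) :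
    Integrable (fun ω => truncAt M (U ω)) μ :=
  .of_bound ((continuous_truncAt M).comp_aestronglyMeasurable hU) M
    (.of_forall fun ω => abs_truncAt_le hM (U ω))

lemma abs_integral_truncAt_le (hU : AEStronglyMeasurable U μ) (hm : 1 ≤ m)
    (hUm : Integrable (fun ω => |U ω| ^ m) μ) (hU0 : ∫ ω, U ω ∂μ = 0) (hM : 0 < M) :
    |∫ ω, truncAt M (U ω) ∂μ| ≤ (∫ ω, |U ω| ^ m ∂μ) / M ^ (m - 1) := by
  have hUi := integrable_of_integrable_abs_rpow hU hm hUm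
  calc |∫ ω, truncAt M (U ω) ∂μ| = ‖∫ ω, (U ω - truncAt M (U ω)) ∂μ‖ := by
        rw [integral_sub hUi (integrable_truncAt_comp hM.le hU), hU0, zero_sub, Real.norm_eq_abs,
          abs_neg]
    _ ≤ ∫ ω, |U ω| ^ m / M ^ (m - 1) ∂μ := norm_integral_le_of_norm_le (hUm.div_const _)
        (.of_forall fun ω => abs_sub_truncAt_le hM hm (U ω))
    _ = (∫ ω, |U ω| ^ m ∂μ) / M ^ (m - 1) := integral_div _ _

lemma abs_integral_mul_sub_truncAt_le (hU : AEStronglyMeasurable U μ)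
    (hV : AEStronglyMeasurable V μ) (hm : 2 ≤ m) (hUm : Integrable (fun ω => |U ω| ^ m) μ)
    (hVm : Integrable (fun ω => |V ω| ^ m) μ) (hM : 0 < M) :
    |∫ ω, U ω * V ω ∂μ - ∫ ω, truncAt M (U ω) * truncAt M (V ω) ∂μ|
      ≤ 2 * (∫ ω, |U ω| ^ m ∂μ + ∫ ω, |V ω| ^ m ∂μ) / M ^ (m - 2) := by
  have hT : Integrable (fun ω => truncAt M (U ω) * truncAt M (V ω)) μ :=
    (integrable_truncAt_comp hM.le hV).bdd_mul
      ((continuous_truncAt M).comp_aestronglyMeasurable hU)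
      (.of_forall fun ω => abs_truncAt_le hM.le (U ω))
  calc |∫ ω, U ω * V ω ∂μ - ∫ ω, truncAt M (U ω) * truncAt M (V ω) ∂μ|
      = ‖∫ ω, (U ω * V ω - truncAt M (U ω) * truncAt M (V ω)) ∂μ‖ := by
        rw [integral_sub (integrable_mul_of_integrable_abs_rpow hU hV hm hUm hVm) hT,
          Real.norm_eq_abs]
    _ ≤ ∫ ω, 2 * (|U ω| ^ m + |V ω| ^ m) / M ^ (m - 2) ∂μ :=
        norm_integral_le_of_norm_le (((hUm.add hVm).const_mul 2).div_const _)
          (.of_forall fun ω => abs_mul_sub_truncAt_mul_le hM hm _ _)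
    _ = 2 * (∫ ω, |U ω| ^ m ∂μ + ∫ ω, |V ω| ^ m ∂μ) / M ^ (m - 2) := by
        rw [integral_div, integral_const_mul, integral_add hUm hVm]

lemma abs_integral_mul_le_abs_cov_truncAt_add (hU : AEStronglyMeasurable U μ)
    (hV : AEStronglyMeasurable V μ) (hm : 2 ≤ m) (hUm : Integrable (fun ω => |U ω| ^ m) μ)
    (hVm : Integrable (fun ω => |V ω| ^ m) μ) (hU0 : ∫ ω, U ω ∂μ = 0) (hV0 : ∫ ω, V ω ∂μ = 0)
    (hM : 1 ≤ M) :
    |∫ ω, U ω * V ω ∂μ| ≤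
      |∫ ω, truncAt M (U ω) * truncAt M (V ω) ∂μ
          - (∫ ω, truncAt M (U ω) ∂μ) * ∫ ω, truncAt M (V ω) ∂μ|
        + (2 * (∫ ω, |U ω| ^ m ∂μ + ∫ ω, |V ω| ^ m ∂μ)
            + (∫ ω, |U ω| ^ m ∂μ) * ∫ ω, |V ω| ^ m ∂μ) / M ^ (m - 2) := by
  have hM0 : 0 < M := by linarith
  have ha := abs_integral_truncAt_le hU (by linarith) hUm hU0 hM0
  have hb := abs_integral_truncAt_le hV (by linarith) hVm hV0 hM0
  have htrunc := abs_integral_mul_sub_truncAt_le hU hV hm hUm hVm hM0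
  set A := ∫ ω, |U ω| ^ m ∂μ
  set B := ∫ ω, |V ω| ^ m ∂μ
  set a := ∫ ω, truncAt M (U ω) ∂μ
  set b := ∫ ω, truncAt M (V ω) ∂μ
  set P := ∫ ω, U ω * V ω ∂μ
  set T := ∫ ω, truncAt M (U ω) * truncAt M (V ω) ∂μ
  have hprod : |a * b| ≤ A * B / M ^ (m - 2) := by
    have h1 : 1 ≤ M ^ (m - 1) := Real.one_le_rpow hM (by linarith)
    have h2 : M ^ (m - 2) ≤ M ^ (m - 1) * M ^ (m - 1) :=
      calc M ^ (m - 2) ≤ M ^ (m - 1) := Real.rpow_le_rpow_of_exponent_le hM (by linarith)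
        _ ≤ M ^ (m - 1) * M ^ (m - 1) := le_mul_of_one_le_right (by positivity) h1
    calc |a * b| ≤ A / M ^ (m - 1) * (B / M ^ (m - 1)) := by
          rw [abs_mul]; exact mul_le_mul ha hb (abs_nonneg _) (by positivity)
      _ = A * B / (M ^ (m - 1) * M ^ (m - 1)) := by rw [div_mul_div_comm]
      _ ≤ A * B / M ^ (m - 2) := by gcongr
  calc |P| ≤ |P - T| + |T - a * b| + |a * b| := by
        linarith [abs_sub_le P T (a * b), abs_sub_abs_le_abs_sub P (a * b)]
    _ ≤ _ := by rw [add_div]; linarith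

end Moments

section Dependence

variable {Ω : Type*} [MeasurableSpace Ω]

def IsStrictlyStationary (μ : Measure Ω) (X : ℤ → Ω → ℝ) : Prop :=
  ∀ (t : ℤ) (d : ℕ) (idx : Fin d → ℤ),
    Measure.map (fun ω => fun i => X (idx i + t) ω) μ
      = Measure.map (fun ω => fun i => X (idx i) ω) μ

def IsEtaWeaklyDependent (μ : Measure Ω) (X : ℤ → Ω → ℝ) (η : ℕ → ℝ) : Prop :=
  ∀ (r u v : ℕ) (iidx : Fin u → ℤ) (jidx : Fin v → ℤ),
    Monotone iidx → Monotone jidx →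
    (∀ (a : Fin u) (b : Fin v), iidx a + r ≤ jidx b) →
    ∀ (g₁ : (Fin u → ℝ) → ℝ) (g₂ : (Fin v → ℝ) → ℝ) (L₁ L₂ B₁ B₂ : ℝ),
      (∀ x, |g₁ x| ≤ B₁) → (∀ x, |g₂ x| ≤ B₂) →
      (∀ x y, |g₁ x - g₁ y| ≤ L₁ * ∑ i, |x i - y i|) →
      (∀ x y, |g₂ x - g₂ y| ≤ L₂ * ∑ i, |x i - y i|) →
      |(∫ ω, g₁ (fun a => X (iidx a) ω) * g₂ (fun b => X (jidx b) ω) ∂μ)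
          - (∫ ω, g₁ (fun a => X (iidx a) ω) ∂μ) * ∫ ω, g₂ (fun b => X (jidx b) ω) ∂μ|
        ≤ ((u : ℝ) * L₁ * B₂ + (v : ℝ) * L₂ * B₁) * η r

variable {μ : Measure Ω} {X : ℤ → Ω → ℝ}

lemma IsStrictlyStationary.identDistrib_shift (hX : IsStrictlyStationary μ X)
    (hmeas : ∀ i, Measurable (X i)) (t : ℤ) {d : ℕ} (idx : Fin d → ℤ) :
    IdentDistrib (fun ω i => X (idx i + t) ω) (fun ω i => X (idx i) ω) μ μ where
  aemeasurable_fst := (measurable_pi_lambda _ fun _ => hmeas _).aemeasurable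
  aemeasurable_snd := (measurable_pi_lambda _ fun _ => hmeas _).aemeasurable
  map_eq := hX t d idx

lemma IsStrictlyStationary.identDistrib (hX : IsStrictlyStationary μ X)
    (hmeas : ∀ i, Measurable (X i)) (i : ℤ) : IdentDistrib (X i) (X 0) μ μ := by
  have h := (hX.identDistrib_shift hmeas i (fun _ : Fin 1 => 0)).comp (measurable_pi_apply 0)
  simp only [zero_add] at h
  exact h

lemma IsStrictlyStationary.integral_mul_neg (hX : IsStrictlyStationary μ X)
    (hmeas : ∀ i, Measurable (X i)) (ℓ : ℤ) :
    ∫ ω, X 0 ω * X (-ℓ) ω ∂μ = ∫ ω, X 0 ω * X ℓ ω ∂μ := by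
  have h := ((hX.identDistrib_shift hmeas (-ℓ) ![0, ℓ]).comp
    (u := fun v => v 0 * v 1) (by fun_prop)).integral_eq
  simp only [Function.comp_def, Matrix.cons_val_zero, Matrix.cons_val_one, zero_add,
    add_neg_cancel] at h
  simpa only [mul_comm] using h

lemma IsStrictlyStationary.integrable_abs_rpow {m : ℝ} (hX : IsStrictlyStationary μ X)
    (hmeas : ∀ i, Measurable (X i)) (hXm : Integrable (fun ω => |X 0 ω| ^ m) μ)
    (i : ℤ) : Integrable (fun ω => |X i ω| ^ m) μ :=
  ((hX.identDistrib hmeas i).comp (u := fun x => |x| ^ m) (by fun_prop)).integrable_iff.2 hXm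

lemma IsStrictlyStationary.integral_abs_rpow {m : ℝ} (hX : IsStrictlyStationary μ X)
    (hmeas : ∀ i, Measurable (X i)) (i : ℤ) :
    ∫ ω, |X i ω| ^ m ∂μ = ∫ ω, |X 0 ω| ^ m ∂μ :=
  ((hX.identDistrib hmeas i).comp (u := fun x => |x| ^ m) (by fun_prop)).integral_eq

lemma IsEtaWeaklyDependent.abs_cov_comp_le {η : ℕ → ℝ} (hX : IsEtaWeaklyDependent μ X η)
    {g : ℝ → ℝ} {L B : ℝ} (hgB : ∀ x, |g x| ≤ B) (hgL : ∀ x y, |g x - g y| ≤ L * |x - y|)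
    {i j : ℤ} {r : ℕ} (hij : i + r ≤ j) :
    |∫ ω, g (X i ω) * g (X j ω) ∂μ - (∫ ω, g (X i ω) ∂μ) * ∫ ω, g (X j ω) ∂μ|
      ≤ 2 * L * B * η r := by
  have h := hX r 1 1 (fun _ => i) (fun _ => j) monotone_const monotone_const (fun _ _ => hij)
    (fun v => g (v 0)) (fun v => g (v 0)) L L B B (fun _ => hgB _) (fun _ => hgB _)
    (fun x y => by simpa using hgL (x 0) (y 0)) (fun x y => by simpa using hgL (x 0) (y 0))
  convert h using 1
  push_cast
  ring

end Dependence

section Covariogram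

variable {Ω : Type*} [MeasurableSpace Ω] {μ : Measure Ω} [IsProbabilityMeasure μ]
  {X : ℤ → Ω → ℝ} {η : ℕ → ℝ} {m α K : ℝ}

lemma IsEtaWeaklyDependent.abs_integral_mul_le (hX : IsStrictlyStationary μ X)
    (hdep : IsEtaWeaklyDependent μ X η) (hmeas : ∀ i, Measurable (X i))
    (hzero : ∀ i, ∫ ω, X i ω ∂μ = 0) (hXm : Integrable (fun ω => |X 0 ω| ^ m) μ)
    (hm : 2 ≤ m) (hα : 0 ≤ α) (hη : ∀ r : ℕ, 1 ≤ r → η r ≤ K * (r : ℝ) ^ (-α))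
    {r : ℕ} (hr : 1 ≤ r) :
    |∫ ω, X 0 ω * X r ω ∂μ| ≤
      (4 * ∫ ω, |X 0 ω| ^ m ∂μ + (∫ ω, |X 0 ω| ^ m ∂μ) ^ 2 + 2 * K)
        * (r : ℝ) ^ (-(α * (m - 2) / (m - 1))) := by
  set β := α * (m - 2) / (m - 1) with hβ
  have hr0 : (0 : ℝ) < r := by exact_mod_cast hr
  -- the truncation level that balances `M η_r` against `M ^ (2 - m)`
  set M := (r : ℝ) ^ (α / (m - 1))
  have hM : 1 ≤ M := Real.one_le_rpow (by exact_mod_cast hr) (div_nonneg hα (by linarith))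
  have hMβ : M ^ (m - 2) = (r : ℝ) ^ β := by
    rw [← Real.rpow_mul hr0.le]; congr 1; ring
  have hMη : M * η r ≤ K * (r : ℝ) ^ (-β) := by
    calc M * η r ≤ M * (K * (r : ℝ) ^ (-α)) := by gcongr; exact hη r hr
      _ = K * (r : ℝ) ^ (-β) := by
          rw [mul_left_comm, ← Real.rpow_add hr0, hβ]
          have : m - 1 ≠ 0 := by linarith
          congr 2; field_simp; ring
  have hmom := hX.integrable_abs_rpow hmeas hXm
  have htrunc := abs_integral_mul_le_abs_cov_truncAt_add (hmeas 0).aestronglyMeasurable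
    (hmeas r).aestronglyMeasurable hm (hmom 0) (hmom r) (hzero 0) (hzero r) hM
  have hcov := hdep.abs_cov_comp_le (g := truncAt M) (L := 1) (B := M)
    (abs_truncAt_le (by linarith)) (by simpa using abs_truncAt_sub_truncAt_le M) (i := 0)
    (j := r) (r := r) (by simp)
  rw [hX.integral_abs_rpow hmeas r, hMβ] at htrunc
  set E := ∫ ω, |X 0 ω| ^ m ∂μ
  rw [show 2 * (E + E) + E * E = 4 * E + E ^ 2 by ring] at htrunc
  calc |∫ ω, X 0 ω * X r ω ∂μ| ≤ 2 * (M * η r) + (4 * E + E ^ 2) * (r : ℝ) ^ (-β) := by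
        rw [Real.rpow_neg hr0.le, ← div_eq_mul_inv]; linarith
    _ ≤ (4 * E + E ^ 2 + 2 * K) * (r : ℝ) ^ (-β) := by linarith

lemma IsEtaWeaklyDependent.abs_integral_mul_le_abs_rpow (hX : IsStrictlyStationary μ X)
    (hdep : IsEtaWeaklyDependent μ X η) (hmeas : ∀ i, Measurable (X i))
    (hzero : ∀ i, ∫ ω, X i ω ∂μ = 0) (hXm : Integrable (fun ω => |X 0 ω| ^ m) μ)
    (hm : 2 ≤ m) (hα : 0 ≤ α) (hη : ∀ r : ℕ, 1 ≤ r → η r ≤ K * (r : ℝ) ^ (-α))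
    {ℓ : ℤ} (hℓ : ℓ ≠ 0) :
    |∫ ω, X 0 ω * X ℓ ω ∂μ| ≤
      (4 * ∫ ω, |X 0 ω| ^ m ∂μ + (∫ ω, |X 0 ω| ^ m ∂μ) ^ 2 + 2 * K)
        * |(ℓ : ℝ)| ^ (-(α * (m - 2) / (m - 1))) := by
  have hsymm : ∫ ω, X 0 ω * X ℓ ω ∂μ = ∫ ω, X 0 ω * X ℓ.natAbs ω ∂μ := by
    rcases Int.natAbs_eq ℓ with h | h <;> conv_lhs => rw [h]
    exact hX.integral_mul_neg hmeas _
  rw [hsymm, ← Int.cast_abs, ← Nat.cast_natAbs]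
  exact hdep.abs_integral_mul_le hX hmeas hzero hXm hm hα hη (Int.natAbs_pos.2 hℓ)

end Covariogram

lemma tsum_indicator_inv_sq_le {n : ℕ} (hn : 1 ≤ n) :
    ∑' k : ℕ, {k : ℕ | n ≤ k}.indicator (fun k : ℕ => ((k : ℝ) ^ 2)⁻¹) k ≤ 2 / n := by
  refine Real.tsum_le_of_sum_range_le (Set.indicator_nonneg fun _ _ => by positivity) fun N => ?_
  calc ∑ k ∈ range N, {k : ℕ | n ≤ k}.indicator (fun k : ℕ => ((k : ℝ) ^ 2)⁻¹) k
      = ∑ k ∈ Ioo (n - 1) N, {k : ℕ | n ≤ k}.indicator (fun k : ℕ => ((k : ℝ) ^ 2)⁻¹) k := by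
        refine (sum_subset (fun k hk => by simp at hk ⊢; omega) fun k hkN hk => ?_).symm
        exact Set.indicator_of_notMem (by simp at hkN hk ⊢; omega) _
    _ ≤ ∑ k ∈ Ioo (n - 1) N, ((k : ℝ) ^ 2)⁻¹ :=
        sum_le_sum fun k _ => Set.indicator_le_self' (fun _ _ => by positivity) k
    _ ≤ 2 / n := by
        simpa [Nat.cast_sub hn] using sum_Ioo_inv_sq_le (α := ℝ) (n - 1) N

lemma summable_inv_sq_int : Summable fun ℓ : ℤ => ((ℓ : ℝ) ^ 2)⁻¹ := by
  simpa [one_div] using Real.summable_one_div_int_pow.2 one_lt_two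

lemma tsum_inv_sq_tail_int_le {n : ℕ} (hn : 1 ≤ n) :
    ∑' ℓ : {ℓ : ℤ // (n : ℤ) ≤ |ℓ|}, (((ℓ : ℤ) : ℝ) ^ 2)⁻¹ ≤ 4 / n := by
  have hG2 := tsum_indicator_inv_sq_le hn
  set G := {k : ℕ | n ≤ k}.indicator (fun k : ℕ => ((k : ℝ) ^ 2)⁻¹)
  have hG : Summable G := (Real.summable_nat_pow_inv.2 one_lt_two).indicator _
  have hF := summable_inv_sq_int.indicator {ℓ : ℤ | (n : ℤ) ≤ |ℓ|}
  have hsplit : ∀ k : ℕ, {ℓ : ℤ | (n : ℤ) ≤ |ℓ|}.indicator (fun ℓ : ℤ => ((ℓ : ℝ) ^ 2)⁻¹) k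
      + {ℓ : ℤ | (n : ℤ) ≤ |ℓ|}.indicator (fun ℓ : ℤ => ((ℓ : ℝ) ^ 2)⁻¹) (-(k + 1))
      = G k + G (k + 1) := by
    intro k
    have h1 : |(k : ℤ)| = k := abs_of_nonneg (by positivity)
    have h2 : |(-((k : ℤ) + 1))| = k + 1 := by rw [abs_neg]; exact abs_of_nonneg (by positivity)
    simp only [G, Set.indicator_apply, Set.mem_ofPred_eq, h1, h2]
    push_cast [neg_sq]
    norm_cast
  have hshift : ∑' k, G (k + 1) ≤ ∑' k, G k := by
    rw [hG.tsum_eq_zero_add]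
    exact le_add_of_nonneg_left (Set.indicator_nonneg (fun _ _ => by positivity) 0)
  calc ∑' ℓ : {ℓ : ℤ // (n : ℤ) ≤ |ℓ|}, (((ℓ : ℤ) : ℝ) ^ 2)⁻¹
      = ∑' k : ℕ, (G k + G (k + 1)) := by
        rw [← tsum_congr hsplit, tsum_nat_add_neg_add_one hF]
        exact tsum_subtype {ℓ : ℤ | (n : ℤ) ≤ |ℓ|} fun ℓ : ℤ => ((ℓ : ℝ) ^ 2)⁻¹
    _ = ∑' k, G k + ∑' k, G (k + 1) := hG.tsum_add ((summable_nat_add_iff 1).2 hG)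
    _ ≤ 2 / n + 2 / n := by linarith
    _ = 4 / n := by ring

lemma tsum_sq_tail_le_of_abs_le_rpow {f : ℤ → ℝ} {c β : ℝ} (hβ : 1 ≤ β)
    (hf : ∀ ℓ : ℤ, ℓ ≠ 0 → |f ℓ| ≤ c * |(ℓ : ℝ)| ^ (-β)) {n : ℕ} (hn : 1 ≤ n) :
    ∑' ℓ : {ℓ : ℤ // (n : ℤ) ≤ |ℓ|}, f ℓ ^ 2 ≤ 4 * c ^ 2 * (n : ℝ) ^ (1 - 2 * β) := by
  have hn0 : (0 : ℝ) < n := by exact_mod_cast hn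
  set C := c ^ 2 * (n : ℝ) ^ (2 - 2 * β)
  have hpt : ∀ ℓ : {ℓ : ℤ // (n : ℤ) ≤ |ℓ|}, f ℓ ^ 2 ≤ C * (((ℓ : ℤ) : ℝ) ^ 2)⁻¹ := by
    rintro ⟨ℓ, hℓ⟩
    have hnℓ : (n : ℝ) ≤ |(ℓ : ℝ)| := by rw [← Int.cast_abs]; exact_mod_cast hℓ
    have hℓ0 : ℓ ≠ 0 := by rintro rfl; simp at hℓ; omega
    have ha : 0 < |(ℓ : ℝ)| := hn0.trans_le hnℓ
    calc f ℓ ^ 2 = |f ℓ| ^ 2 := (sq_abs _).symm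
      _ ≤ (c * |(ℓ : ℝ)| ^ (-β)) ^ 2 := pow_le_pow_left₀ (abs_nonneg _) (hf ℓ hℓ0) 2
      _ = c ^ 2 * |(ℓ : ℝ)| ^ (2 - 2 * β) * (|(ℓ : ℝ)| ^ 2)⁻¹ := by
          have e : |(ℓ : ℝ)| ^ (-β * 2) = |(ℓ : ℝ)| ^ (2 - 2 * β) * (|(ℓ : ℝ)| ^ 2)⁻¹ := by
            rw [← Real.rpow_two, ← Real.rpow_neg ha.le, ← Real.rpow_add ha]
            ring_nf
          rw [mul_pow, ← Real.rpow_mul_natCast ha.le, Nat.cast_ofNat, e, mul_assoc]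
      _ ≤ c ^ 2 * (n : ℝ) ^ (2 - 2 * β) * ((ℓ : ℝ) ^ 2)⁻¹ := by
          rw [sq_abs]
          have := Real.rpow_le_rpow_of_nonpos hn0 hnℓ (by linarith : 2 - 2 * β ≤ 0)
          gcongr
  have hS : Summable fun ℓ : {ℓ : ℤ // (n : ℤ) ≤ |ℓ|} => C * (((ℓ : ℤ) : ℝ) ^ 2)⁻¹ :=
    (summable_inv_sq_int.subtype _).mul_left C
  calc ∑' ℓ : {ℓ : ℤ // (n : ℤ) ≤ |ℓ|}, f ℓ ^ 2
      ≤ ∑' ℓ : {ℓ : ℤ // (n : ℤ) ≤ |ℓ|}, C * (((ℓ : ℤ) : ℝ) ^ 2)⁻¹ :=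
        Summable.tsum_le_tsum hpt (hS.of_nonneg_of_le (fun _ => sq_nonneg _) hpt) hS
    _ = C * ∑' ℓ : {ℓ : ℤ // (n : ℤ) ≤ |ℓ|}, (((ℓ : ℤ) : ℝ) ^ 2)⁻¹ := tsum_mul_left
    _ ≤ C * (4 / n) := by gcongr; exact tsum_inv_sq_tail_int_le hn
    _ = 4 * c ^ 2 * (n : ℝ) ^ (1 - 2 * β) := by
        rw [show 1 - 2 * β = 2 - 2 * β - 1 by ring, Real.rpow_sub hn0, Real.rpow_one]
        ring

theorem stmt17_general
    {Ω : Type*} [MeasurableSpace Ω] (μ : Measure Ω) [IsProbabilityMeasure μ]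
    (X : ℤ → Ω → ℝ) (R : ℤ → ℝ) (η : ℕ → ℝ) (m α : ℝ)
    (hm : 4 < m) (hα : 3 < α)
    (hmeas : ∀ i, Measurable (X i))
    (hzero : ∀ i : ℤ, ∫ ω, X i ω ∂μ = 0)
    (hXm : Integrable (fun ω => |X 0 ω| ^ m) μ)
    (hstat : ∀ (t : ℤ) (d : ℕ) (idx : Fin d → ℤ),
      Measure.map (fun ω => fun i => X (idx i + t) ω) μ
        = Measure.map (fun ω => fun i => X (idx i) ω) μ)
    (hR : ∀ ℓ : ℤ, R ℓ = ∫ ω, X 0 ω * X ℓ ω ∂μ)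
    -- η-weak dependence of X
    (hηdep : ∀ (r u v : ℕ) (iidx : Fin u → ℤ) (jidx : Fin v → ℤ),
      Monotone iidx → Monotone jidx →
      (∀ (a : Fin u) (b : Fin v), iidx a + r ≤ jidx b) →
      ∀ (g₁ : (Fin u → ℝ) → ℝ) (g₂ : (Fin v → ℝ) → ℝ) (L₁ L₂ B₁ B₂ : ℝ),
        (∀ x, |g₁ x| ≤ B₁) → (∀ x, |g₂ x| ≤ B₂) →
        (∀ x y, |g₁ x - g₁ y| ≤ L₁ * ∑ i, |x i - y i|) →
        (∀ x y, |g₂ x - g₂ y| ≤ L₂ * ∑ i, |x i - y i|) →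
        |(∫ ω, g₁ (fun a => X (iidx a) ω) * g₂ (fun b => X (jidx b) ω) ∂μ)
            - (∫ ω, g₁ (fun a => X (iidx a) ω) ∂μ) * ∫ ω, g₂ (fun b => X (jidx b) ω) ∂μ|
          ≤ ((u : ℝ) * L₁ * B₂ + (v : ℝ) * L₂ * B₁) * η r)
    -- η_r = O(r^{−α})
    (hηrate : ∃ K : ℝ, 0 < K ∧ ∀ r : ℕ, 1 ≤ r → η r ≤ K * (r : ℝ) ^ (-α)) :
    (∃ c : ℝ, 0 < c ∧ ∀ ℓ : ℤ, ℓ ≠ 0 →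
      |R ℓ| ≤ c * |(ℓ : ℝ)| ^ (-(α * (m - 2) / (m - 1))))
    ∧ (∃ c' : ℝ, 0 < c' ∧ ∀ n : ℕ, 1 ≤ n →
      (∑' ℓ : {ℓ : ℤ // (n : ℤ) ≤ |ℓ|}, R (ℓ : ℤ) ^ 2)
        ≤ c' * (n : ℝ) ^ (1 - 2 * α * (m - 2) / (m - 1))) := by
  obtain ⟨K, hK, hη⟩ := hηrate
  set E := ∫ ω, |X 0 ω| ^ m ∂μ
  set β := α * (m - 2) / (m - 1) with hβ
  have hc : 0 < 4 * E + E ^ 2 + 2 * K := by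
    have : 0 ≤ E := integral_nonneg fun _ => by positivity
    nlinarith
  have hcov : ∀ ℓ : ℤ, ℓ ≠ 0 → |R ℓ| ≤ (4 * E + E ^ 2 + 2 * K) * |(ℓ : ℝ)| ^ (-β) :=
    fun ℓ hℓ => hR ℓ ▸ IsEtaWeaklyDependent.abs_integral_mul_le_abs_rpow hstat hηdep hmeas hzero
      hXm (by linarith) (by linarith) hη hℓ
  have hβ1 : 1 ≤ β := by rw [hβ, le_div_iff₀ (by linarith)]; nlinarith
  refine ⟨⟨_, hc, hcov⟩, 4 * (4 * E + E ^ 2 + 2 * K) ^ 2, by positivity, fun n hn => ?_⟩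
  rw [show 1 - 2 * α * (m - 2) / (m - 1) = 1 - 2 * β by rw [hβ]; ring]
  exact tsum_sq_tail_le_of_abs_le_rpow hβ1 hcov hn

/-- for an η-weakly dependent strictly stationary process with moments of
order `m > 4` and `η_r = O(r^{−α})`, `α > 3`, the covariogram satisfies
`|R(ℓ)| ≤ c|ℓ|^{−α(m−2)/(m−1)}` and `Σ_{|ℓ|≥n} R(ℓ)² ≤ c' n^{1−2α(m−2)/(m−1)}`. -/
theorem stmt17
    {Ω : Type*} [MeasurableSpace Ω] (μ : Measure Ω) [IsProbabilityMeasure μ]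
    (X : ℤ → Ω → ℝ) (R : ℤ → ℝ) (η : ℕ → ℝ) (m α : ℝ)
    (hm : 4 < m) (hα : 3 < α)
    (hηpos : ∀ r, 0 ≤ η r)
    (hmeas : ∀ i, Measurable (X i))
    (hzero : ∀ i : ℤ, ∫ ω, X i ω ∂μ = 0)
    (hXm : Integrable (fun ω => |X 0 ω| ^ m) μ)
    (hstat : ∀ (t : ℤ) (d : ℕ) (idx : Fin d → ℤ),
      Measure.map (fun ω => fun i => X (idx i + t) ω) μ
        = Measure.map (fun ω => fun i => X (idx i) ω) μ)
    (hR : ∀ ℓ : ℤ, R ℓ = ∫ ω, X 0 ω * X ℓ ω ∂μ)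
    -- η-weak dependence of X
    (hηdep : ∀ (r u v : ℕ) (iidx : Fin u → ℤ) (jidx : Fin v → ℤ),
      Monotone iidx → Monotone jidx →
      (∀ (a : Fin u) (b : Fin v), iidx a + r ≤ jidx b) →
      ∀ (g₁ : (Fin u → ℝ) → ℝ) (g₂ : (Fin v → ℝ) → ℝ) (L₁ L₂ B₁ B₂ : ℝ),
        (∀ x, |g₁ x| ≤ B₁) → (∀ x, |g₂ x| ≤ B₂) →
        (∀ x y, |g₁ x - g₁ y| ≤ L₁ * ∑ i, |x i - y i|) →
        (∀ x y, |g₂ x - g₂ y| ≤ L₂ * ∑ i, |x i - y i|) →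
        |(∫ ω, g₁ (fun a => X (iidx a) ω) * g₂ (fun b => X (jidx b) ω) ∂μ)
            - (∫ ω, g₁ (fun a => X (iidx a) ω) ∂μ) * ∫ ω, g₂ (fun b => X (jidx b) ω) ∂μ|
          ≤ ((u : ℝ) * L₁ * B₂ + (v : ℝ) * L₂ * B₁) * η r)
    -- η_r = O(r^{−α})
    (hηrate : ∃ K : ℝ, 0 < K ∧ ∀ r : ℕ, 1 ≤ r → η r ≤ K * (r : ℝ) ^ (-α)) :
    (∃ c : ℝ, 0 < c ∧ ∀ ℓ : ℤ, ℓ ≠ 0 →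
      |R ℓ| ≤ c * |(ℓ : ℝ)| ^ (-(α * (m - 2) / (m - 1))))
    ∧ (∃ c' : ℝ, 0 < c' ∧ ∀ n : ℕ, 1 ≤ n →
      (∑' ℓ : {ℓ : ℤ // (n : ℤ) ≤ |ℓ|}, R (ℓ : ℤ) ^ 2)
        ≤ c' * (n : ℝ) ^ (1 - 2 * α * (m - 2) / (m - 1))) :=
  stmt17_general μ X R η m α hm hα hmeas hzero hXm hstat hR hηdep hηrate
end
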